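/- arXiv:2206.10346 — 12 statements merged into one kernel-verified Lean document; each statement's English description precedes it below -/
import Mathlib

section
/- Let R be a unital ring that is also an algebra over ℚ (e.g. the ring of n×n complex matrices), let A ∈ R be invertible, and let X ∈ R commute with A. Set Y = 1 − A⁻¹X² and X' = X(1 + (1/2)Y). Then X' commutes with A, and 1 − A⁻¹(X')² = (3/4)Y² + (1/4)Y³. -/
/-- One step of the inversion-free residual identity: if `X` commutes with the
invertible element `A` and `Y = 1 - A⁻¹ X²`, then `X' = X (1 + (1/2) Y)`
commutes with `A` and `1 - A⁻¹ (X')² = (3/4) Y² + (1/4) Y³`. -/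
theorem siai_one_step_identity {R : Type*} [Ring R] [Algebra ℚ R]
    (A X : R) [Invertible A] (hX : A * X = X * A)
    (Y X' : R) (hY : Y = 1 - ⅟A * X ^ 2)
    (hX' : X' = X * (1 + (1/2 : ℚ) • Y)) :
    A * X' = X' * A ∧
      1 - ⅟A * X' ^ 2 = (3/4 : ℚ) • Y ^ 2 + (1/4 : ℚ) • Y ^ 3 := by
  have hCAX : Commute A X := hX
  have hCaX : Commute (⅟A) X := hCAX.invOf_left
  have hCXY : Commute X Y := by
    rw [hY]
    exact (Commute.one_right X).sub_right (hCaX.symm.mul_right ((Commute.refl X).pow_right 2))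
  have hXY : X * Y = Y * X := hCXY
  have hCAY : Commute A Y := by
    rw [hY]
    exact (Commute.one_right A).sub_right
      ((Commute.invOf_right (Commute.refl A)).mul_right (hCAX.pow_right 2))
  have hAY : A * Y = Y * A := hCAY
  have haXX : ⅟A * X ^ 2 = 1 - Y := by rw [hY, sub_sub_cancel]
  constructor
  · rw [hX']
    calc A * (X * (1 + (1/2 : ℚ) • Y)) = (A * X) * (1 + (1/2 : ℚ) • Y) := by rw [mul_assoc]
      _ = (X * A) * (1 + (1/2 : ℚ) • Y) := by rw [hX]
      _ = X * (A * (1 + (1/2 : ℚ) • Y)) := by rw [mul_assoc]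
      _ = X * ((1 + (1/2 : ℚ) • Y) * A) := by
          rw [mul_add, add_mul, mul_one, one_mul, mul_smul_comm, smul_mul_assoc, hAY]
      _ = X * (1 + (1/2 : ℚ) • Y) * A := by rw [mul_assoc]
  · rw [hX']
    have hstep : (X * (1 + (1/2 : ℚ) • Y)) ^ 2 = X ^ 2 * (1 + (1/2 : ℚ) • Y) ^ 2 := by
      have hc : (1 + (1/2 : ℚ) • Y) * X = X * (1 + (1/2 : ℚ) • Y) := by
        rw [add_mul, mul_add, one_mul, mul_one, smul_mul_assoc, mul_smul_comm, hXY]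
      calc (X * (1 + (1/2 : ℚ) • Y)) ^ 2
          = X * ((1 + (1/2 : ℚ) • Y) * X) * (1 + (1/2 : ℚ) • Y) := by
            rw [pow_two]; noncomm_ring
        _ = X ^ 2 * (1 + (1/2 : ℚ) • Y) ^ 2 := by rw [hc, pow_two, pow_two]; noncomm_ring
    rw [hstep, ← mul_assoc, haXX]
    have expand : (1 - Y) * (1 + (1/2 : ℚ) • Y) ^ 2
        = 1 - ((3/4 : ℚ) • Y ^ 2 + (1/4 : ℚ) • Y ^ 3) := by
      simp only [pow_succ, pow_zero, one_mul, sub_mul, mul_add, add_mul, mul_one,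
        smul_mul_assoc, mul_smul_comm, smul_smul, mul_assoc]
      module
    rw [expand, sub_sub_cancel]
end

section
/- Let R be a unital ring that is also an algebra over ℚ (e.g. the ring of n×n complex matrices), let A ∈ R be invertible, and let X₀ ∈ R commute with A. Define the sequence (Xₖ) by Xₖ₊₁ = Xₖ(1 + (1/2)Yₖ) where Yₖ := 1 − A⁻¹Xₖ², and define the sequence (Zₖ) by Z₀ = 1 − A⁻¹X₀² and Zₖ₊₁ = Zₖ²((3/4)·1 + (1/4)Zₖ). Then Zₖ = 1 − A⁻¹Xₖ² (i.e. Zₖ = Yₖ) for every k ∈ ℕ. -/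
/-- The core algebraic identity behind the SIAI residual propagation:
for any `t` in a `ℚ`-algebra,
`1 - t (1 + ½(1-t))² = (1-t)² (¾·1 + ¼(1-t))`. -/
lemma siai_key {R : Type*} [Ring R] [Algebra ℚ R] (t : R) :
    1 - t * (1 + (1/2 : ℚ) • (1 - t)) ^ 2
      = (1 - t) ^ 2 * ((3/4 : ℚ) • (1 : R) + (1/4 : ℚ) • (1 - t)) := by
  simp only [pow_two, mul_add, add_mul, mul_sub, sub_mul, smul_add, smul_sub, smul_smul,
    smul_mul_assoc, mul_smul_comm, mul_one, one_mul, mul_assoc]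
  module

/-- Equivalence (in exact arithmetic) of the inverse-Newton iteration with the
inversion-free SIAI iteration: the residual `Zₖ` propagated by
`Zₖ₊₁ = Zₖ² ((3/4)·1 + (1/4) Zₖ)` coincides with `Yₖ = 1 - A⁻¹ Xₖ²` for all `k`. -/
theorem siai_residual_equivalence {R : Type*} [Ring R] [Algebra ℚ R]
    (A : R) [Invertible A] (X Z : ℕ → R)
    (hX0 : A * X 0 = X 0 * A)
    (hX : ∀ k, X (k + 1) = X k * (1 + (1/2 : ℚ) • (1 - ⅟A * (X k) ^ 2)))
    (hZ0 : Z 0 = 1 - ⅟A * (X 0) ^ 2)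
    (hZ : ∀ k, Z (k + 1) = (Z k) ^ 2 * ((3/4 : ℚ) • (1 : R) + (1/4 : ℚ) • Z k)) :
    ∀ k, Z k = 1 - ⅟A * (X k) ^ 2 := by
  -- ⅟A commutes with anything that commutes with A
  have hinv : ∀ x : R, A * x = x * A → ⅟A * x = x * ⅟A := by
    intro x h
    calc ⅟A * x = ⅟A * x * (A * ⅟A) := by rw [mul_invOf_self, mul_one]
    _ = ⅟A * (x * A) * ⅟A := by noncomm_ring
    _ = ⅟A * (A * x) * ⅟A := by rw [h]
    _ = x * ⅟A := by rw [← mul_assoc, invOf_mul_self, one_mul]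
  -- A commutes with every X k
  have hA : ∀ k, A * X k = X k * A := by
    intro k
    induction k with
    | zero => exact hX0
    | succ k ih =>
      have c1 : Commute A (X k) := ih
      have c2 : Commute A (⅟A) := (mul_invOf_self A).trans (invOf_mul_self A).symm
      have : Commute A (X (k + 1)) := by
        rw [hX k]
        exact c1.mul_right ((Commute.one_right A).add_right
          (((Commute.one_right A).sub_right (c2.mul_right (c1.pow_right 2))).smul_right
            ((1:ℚ)/2)))
      exact this
  intro k
  induction k with
  | zero => exact hZ0
  | succ k ih =>
    have ha : ⅟A * X k = X k * ⅟A := hinv _ (hA k)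
    have hXinv : Commute (X k) (⅟A) := ha.symm
    set t : R := ⅟A * (X k) ^ 2 with ht
    have hXt : Commute (X k) t := hXinv.mul_right ((Commute.refl (X k)).pow_right 2)
    have hXu : Commute (X k) (1 + (1/2 : ℚ) • (1 - t)) :=
      (Commute.one_right _).add_right (((Commute.one_right _).sub_right hXt).smul_right _)
    have hexp : ⅟A * (X (k+1)) ^ 2 = t * (1 + (1/2 : ℚ) • (1 - t)) ^ 2 := by
      rw [hX k, hXu.mul_pow, ← mul_assoc]
    rw [hZ k, ih, ← siai_key t, hexp]
end

section
/- Let B be a complete normed unital ring (a Banach algebra) with submultiplicative norm, and let (Yₖ) be a sequence in B satisfying Yₖ₊₁ = (3/4)Yₖ² + (1/4)Yₖ³ for all k. If ‖Y₀‖ ≤ 1, then ‖Yₖ‖ ≤ ‖Y₀‖^(2^k) for all k ∈ ℕ. In particular, if ‖Y₀‖ < 1 then Yₖ → 0. -/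
/-! Since `3/4 + 1/4 = 1`, on the closed unit ball the step `x ↦ (3/4)x² + (1/4)x³` satisfies
`‖step x‖ ≤ ‖x‖²`, so the ball is invariant and the residual norms are at least squared at each
step, giving `‖Yₖ‖ ≤ ‖Y₀‖^(2^k)`. -/

open Filter Topology

theorem norm_smul_sq_add_smul_cube_le {𝕜 B : Type*} [NormedField 𝕜] [SeminormedRing B]
    [NormedSpace 𝕜 B] (a b : 𝕜) {x : B} (hx : ‖x‖ ≤ 1) :
    ‖a • x ^ 2 + b • x ^ 3‖ ≤ (‖a‖ + ‖b‖) * ‖x‖ ^ 2 := by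
  have hcube : ‖x‖ ^ 3 ≤ ‖x‖ ^ 2 := pow_le_pow_of_le_one (norm_nonneg x) hx (by norm_num)
  calc ‖a • x ^ 2 + b • x ^ 3‖ ≤ ‖a‖ * ‖x ^ 2‖ + ‖b‖ * ‖x ^ 3‖ := by
        rw [← norm_smul, ← norm_smul]
        exact norm_add_le _ _
    _ ≤ ‖a‖ * ‖x‖ ^ 2 + ‖b‖ * ‖x‖ ^ 3 := by
        gcongr <;> exact norm_pow_le' x (by norm_num)
    _ ≤ ‖a‖ * ‖x‖ ^ 2 + ‖b‖ * ‖x‖ ^ 2 := by gcongr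
    _ = (‖a‖ + ‖b‖) * ‖x‖ ^ 2 := by ring

theorem le_pow_two_pow_of_le_sq {u : ℕ → ℝ} (hnn : ∀ k, 0 ≤ u k) (h0 : u 0 ≤ 1)
    (hsq : ∀ k, u k ≤ 1 → u (k + 1) ≤ u k ^ 2) (k : ℕ) : u k ≤ u 0 ^ 2 ^ k := by
  induction k with
  | zero => simp
  | succ k ih =>
    calc u (k + 1) ≤ u k ^ 2 := hsq k (ih.trans (pow_le_one₀ (hnn 0) h0))
      _ ≤ (u 0 ^ 2 ^ k) ^ 2 := pow_le_pow_left₀ (hnn k) ih 2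
      _ = u 0 ^ 2 ^ (k + 1) := by rw [← pow_mul, pow_succ]

theorem tendsto_pow_two_pow_atTop_nhds_zero {a : ℝ} (ha₀ : 0 ≤ a) (ha₁ : a < 1) :
    Tendsto (fun k : ℕ => a ^ 2 ^ k) atTop (𝓝 0) :=
  (tendsto_pow_atTop_nhds_zero_of_lt_one ha₀ ha₁).comp
    (tendsto_pow_atTop_atTop_of_one_lt one_lt_two)

theorem siai_residual_quadratic_convergence_general {B : Type*} [NormedRing B]
    [NormedAlgebra ℝ B]
    (Y : ℕ → B)
    (hY : ∀ k, Y (k + 1) = (3/4 : ℝ) • (Y k) ^ 2 + (1/4 : ℝ) • (Y k) ^ 3)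
    (h0 : ‖Y 0‖ ≤ 1) :
    (∀ k, ‖Y k‖ ≤ ‖Y 0‖ ^ (2 ^ k)) ∧
      (‖Y 0‖ < 1 → Filter.Tendsto Y Filter.atTop (nhds 0)) := by
  have hsq : ∀ k, ‖Y k‖ ≤ 1 → ‖Y (k + 1)‖ ≤ ‖Y k‖ ^ 2 := fun k hk => by
    have hstep := norm_smul_sq_add_smul_cube_le (3/4 : ℝ) (1/4 : ℝ) hk
    norm_num at hstep
    rwa [hY k]
  have hbound := le_pow_two_pow_of_le_sq (fun k => norm_nonneg (Y k)) h0 hsq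
  refine ⟨hbound, fun hlt => ?_⟩
  exact squeeze_zero_norm hbound (tendsto_pow_two_pow_atTop_nhds_zero (norm_nonneg _) hlt)

/-- Quadratic convergence of the SIAI residuals: if `Yₖ₊₁ = (3/4)Yₖ² + (1/4)Yₖ³`
and `‖Y₀‖ ≤ 1`, then `‖Yₖ‖ ≤ ‖Y₀‖^(2^k)`; in particular `Yₖ → 0` when `‖Y₀‖ < 1`. -/
theorem siai_residual_quadratic_convergence {B : Type*} [NormedRing B]
    [NormedAlgebra ℝ B] [CompleteSpace B]
    (Y : ℕ → B)
    (hY : ∀ k, Y (k + 1) = (3/4 : ℝ) • (Y k) ^ 2 + (1/4 : ℝ) • (Y k) ^ 3)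
    (h0 : ‖Y 0‖ ≤ 1) :
    (∀ k, ‖Y k‖ ≤ ‖Y 0‖ ^ (2 ^ k)) ∧
      (‖Y 0‖ < 1 → Filter.Tendsto Y Filter.atTop (nhds 0)) :=
  siai_residual_quadratic_convergence_general Y hY h0
end

section
/- Let α > 0 be a real number and let z ∈ ℂ satisfy |z − 1/α| < 1/α. Define the complex sequence (yₖ) by y₀ = 1 − αz and yₖ₊₁ = (3/4)yₖ² + (1/4)yₖ³. Then yₖ → 0 as k → ∞. -/
/-- Convergence region of the scalar iteration: if `|z - 1/α| < 1/α` then the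
sequence `y₀ = 1 - αz`, `yₖ₊₁ = (3/4)yₖ² + (1/4)yₖ³` tends to `0`. -/
theorem scalar_iteration_convergence_region (α : ℝ) (hα : 0 < α) (z : ℂ)
    (hz : ‖z - 1 / (α : ℂ)‖ < 1 / α)
    (y : ℕ → ℂ) (hy0 : y 0 = 1 - (α : ℂ) * z)
    (hy : ∀ k, y (k + 1) = (3/4 : ℂ) * (y k) ^ 2 + (1/4 : ℂ) * (y k) ^ 3) :
    Filter.Tendsto y Filter.atTop (nhds 0) := by
  have hα' : (α : ℂ) ≠ 0 := by exact_mod_cast hα.ne'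
  set r : ℝ := ‖y 0‖ with hr_def
  have hr0 : 0 ≤ r := norm_nonneg _
  have hr1 : r < 1 := by
    have heq : y 0 = (α : ℂ) * ((1 / (α : ℂ)) - z) := by
      rw [hy0]; field_simp
    have : r = α * ‖z - 1 / (α : ℂ)‖ := by
      rw [hr_def, heq, norm_mul, ← norm_neg (z - 1 / (α : ℂ))]
      simp [Complex.norm_real, abs_of_pos hα]
    rw [this]
    calc α * ‖z - 1 / (α : ℂ)‖ < α * (1 / α) :=
          (mul_lt_mul_iff_right₀ hα).2 hz
      _ = 1 := by field_simp
  have key : ∀ k, ‖y k‖ ≤ r ^ (k + 1) := by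
    intro k
    induction k with
    | zero => simp [hr_def]
    | succ n ih =>
      have ha0 : 0 ≤ ‖y n‖ := norm_nonneg _
      have ha1 : ‖y n‖ ≤ 1 := by
        calc ‖y n‖ ≤ r ^ (n + 1) := ih
          _ ≤ 1 := pow_le_one₀ hr0 hr1.le
      have hstep : ‖y (n + 1)‖ ≤ ‖y n‖ ^ 2 := by
        rw [hy n]
        calc ‖(3/4 : ℂ) * (y n) ^ 2 + (1/4 : ℂ) * (y n) ^ 3‖
            ≤ ‖(3/4 : ℂ) * (y n) ^ 2‖
              + ‖(1/4 : ℂ) * (y n) ^ 3‖ := norm_add_le _ _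
          _ = (3/4) * ‖y n‖ ^ 2 + (1/4) * ‖y n‖ ^ 3 := by
              simp [norm_mul, norm_pow]
          _ ≤ (3/4) * ‖y n‖ ^ 2 + (1/4) * ‖y n‖ ^ 2 := by
              have : ‖y n‖ ^ 3 ≤ ‖y n‖ ^ 2 :=
                pow_le_pow_of_le_one ha0 ha1 (by norm_num)
              nlinarith
          _ = ‖y n‖ ^ 2 := by ring
      calc ‖y (n + 1)‖ ≤ ‖y n‖ ^ 2 := hstep
        _ ≤ (r ^ (n + 1)) ^ 2 := by
            exact pow_le_pow_left₀ ha0 ih 2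
        _ = r ^ (2 * n + 2) := by ring
        _ ≤ r ^ (n + 2) := pow_le_pow_of_le_one hr0 hr1.le (by omega)
  have hz0 : Filter.Tendsto (fun k : ℕ => r ^ (k + 1)) Filter.atTop (nhds 0) := by
    have := tendsto_pow_atTop_nhds_zero_of_lt_one hr0 hr1
    exact this.comp (Filter.tendsto_add_atTop_nat 1)
  rw [tendsto_zero_iff_norm_tendsto_zero]
  exact squeeze_zero (fun k => norm_nonneg _) (fun k => key k) hz0
end

section
/- Let B be a normed unital ring with submultiplicative norm, let Y, Ŷ ∈ B and write E = Ŷ − Y. Then ‖Ŷ²((3/4)·1 + (1/4)Ŷ) − Y²((3/4)·1 + (1/4)Y)‖ ≤ (1/4)‖Y‖²‖E‖ + (2‖Y‖‖E‖ + ‖E‖²)(3/4 + (1/4)‖Y‖ + (1/4)‖E‖). -/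
/-- Exact one-step perturbation bound for the residual update of the SIAI
iteration `Y ↦ Y²((3/4)·1 + (1/4)Y)`, with `E = Ŷ - Y`. -/
theorem siai_Y_update_perturbation_bound {B : Type*} [NormedRing B]
    [NormedAlgebra ℝ B] (Y Yh : B) :
    ‖Yh ^ 2 * ((3/4 : ℝ) • (1 : B) + (1/4 : ℝ) • Yh) -
        Y ^ 2 * ((3/4 : ℝ) • (1 : B) + (1/4 : ℝ) • Y)‖ ≤
      (1/4) * ‖Y‖ ^ 2 * ‖Yh - Y‖ +
        (2 * ‖Y‖ * ‖Yh - Y‖ + ‖Yh - Y‖ ^ 2) *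
          (3/4 + (1/4) * ‖Y‖ + (1/4) * ‖Yh - Y‖) := by
  set E : B := Yh - Y with hE
  have hYh : Yh = Y + E := by rw [hE]; abel
  have hΔ2 : Yh ^ 2 - Y ^ 2 = Y * E + E * Y + E * E := by
    rw [hYh]; noncomm_ring
  have hkey : Yh ^ 2 * ((3/4 : ℝ) • (1 : B) + (1/4 : ℝ) • Yh) -
      Y ^ 2 * ((3/4 : ℝ) • (1 : B) + (1/4 : ℝ) • Y) =
      (3/4 : ℝ) • (Yh ^ 2 - Y ^ 2) +
        (1/4 : ℝ) • (Y ^ 2 * E + (Yh ^ 2 - Y ^ 2) * Yh) := by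
    rw [hYh]
    simp only [mul_add, mul_smul_comm, smul_mul_assoc, mul_one, smul_add, smul_sub]
    noncomm_ring
    module
  have hD2 : ‖Yh ^ 2 - Y ^ 2‖ ≤ 2 * ‖Y‖ * ‖E‖ + ‖E‖ ^ 2 := by
    rw [hΔ2]
    calc ‖Y * E + E * Y + E * E‖ ≤ ‖Y * E + E * Y‖ + ‖E * E‖ := norm_add_le _ _
      _ ≤ ‖Y * E‖ + ‖E * Y‖ + ‖E * E‖ := by
          gcongr; exact norm_add_le _ _
      _ ≤ ‖Y‖ * ‖E‖ + (‖E‖ * ‖Y‖ + ‖E‖ * ‖E‖) := by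
          have := norm_mul_le Y E
          have := norm_mul_le E Y
          have := norm_mul_le E E
          linarith
      _ = 2 * ‖Y‖ * ‖E‖ + ‖E‖ ^ 2 := by ring
  have hYhn : ‖Yh‖ ≤ ‖Y‖ + ‖E‖ := by rw [hYh]; exact norm_add_le _ _
  have h3 : ‖Y ^ 2 * E + (Yh ^ 2 - Y ^ 2) * Yh‖ ≤
      ‖Y‖ ^ 2 * ‖E‖ + (2 * ‖Y‖ * ‖E‖ + ‖E‖ ^ 2) * (‖Y‖ + ‖E‖) := by
    calc ‖Y ^ 2 * E + (Yh ^ 2 - Y ^ 2) * Yh‖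
        ≤ ‖Y ^ 2 * E‖ + ‖(Yh ^ 2 - Y ^ 2) * Yh‖ := norm_add_le _ _
      _ ≤ ‖Y ^ 2‖ * ‖E‖ + ‖Yh ^ 2 - Y ^ 2‖ * ‖Yh‖ := by
          gcongr <;> [exact norm_mul_le _ _; exact norm_mul_le _ _]
      _ ≤ ‖Y‖ ^ 2 * ‖E‖ + (2 * ‖Y‖ * ‖E‖ + ‖E‖ ^ 2) * (‖Y‖ + ‖E‖) := by
          have h1 : ‖Y ^ 2‖ ≤ ‖Y‖ ^ 2 := by
            simpa [pow_two] using norm_mul_le Y Y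
          have h2 : (0:ℝ) ≤ ‖Yh ^ 2 - Y ^ 2‖ := norm_nonneg _
          have h4 : (0:ℝ) ≤ ‖E‖ := norm_nonneg _
          have h5 : (0:ℝ) ≤ ‖Yh‖ := norm_nonneg _
          nlinarith [mul_le_mul hD2 hYhn h5 (by positivity : (0:ℝ) ≤ 2 * ‖Y‖ * ‖E‖ + ‖E‖ ^ 2)]
  calc ‖Yh ^ 2 * ((3/4 : ℝ) • (1 : B) + (1/4 : ℝ) • Yh) -
      Y ^ 2 * ((3/4 : ℝ) • (1 : B) + (1/4 : ℝ) • Y)‖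
      = ‖(3/4 : ℝ) • (Yh ^ 2 - Y ^ 2) +
        (1/4 : ℝ) • (Y ^ 2 * E + (Yh ^ 2 - Y ^ 2) * Yh)‖ := by rw [hkey]
    _ ≤ (3/4 : ℝ) * ‖Yh ^ 2 - Y ^ 2‖ +
        (1/4 : ℝ) * ‖Y ^ 2 * E + (Yh ^ 2 - Y ^ 2) * Yh‖ := by
        calc _ ≤ ‖(3/4 : ℝ) • (Yh ^ 2 - Y ^ 2)‖ +
            ‖(1/4 : ℝ) • (Y ^ 2 * E + (Yh ^ 2 - Y ^ 2) * Yh)‖ := norm_add_le _ _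
          _ = _ := by rw [norm_smul, norm_smul]; norm_num
    _ ≤ (1/4) * ‖Y‖ ^ 2 * ‖E‖ +
        (2 * ‖Y‖ * ‖E‖ + ‖E‖ ^ 2) * (3/4 + (1/4) * ‖Y‖ + (1/4) * ‖E‖) := by
        nlinarith [norm_nonneg E, norm_nonneg Y]
end

section
/- Let A ∈ ℂ^{n×n} have all diagonal entries nonzero, let m ∈ ℕ, and let p be a polynomial over ℂ of degree at most m. Then l(p(A)) ≤ m·l(A) and λ(p(A)) ≤ m·λ(A). -/
/-- The bandwidth `l(M)` of a matrix: `max_{(i,j): M_{ij} ≠ 0} (j - i) +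
max_{(i,j): M_{ij} ≠ 0} (i - j)`, with the convention `l(0) = 0`. -/
noncomputable def bandwidth {n : ℕ} (M : Matrix (Fin n) (Fin n) ℂ) : ℤ :=
  letI := Classical.dec
  letI Ω : Finset (Fin n × Fin n) :=
    Finset.univ.filter fun p : Fin n × Fin n => M p.1 p.2 ≠ 0
  if h : Ω.Nonempty then
    (Ω.sup' h fun p => ((p.2 : ℤ) - (p.1 : ℤ))) +
      (Ω.sup' h fun p => ((p.1 : ℤ) - (p.2 : ℤ)))
  else 0

/-- The real bandwidth `λ(M)`: the minimum of `l(M^σ)` over all simultaneous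
row/column permutations `σ`, where `(M^σ)_{ij} = M_{σ(i) σ(j)}`. -/
noncomputable def realBandwidth {n : ℕ} (M : Matrix (Fin n) (Fin n) ℂ) : ℤ :=
  Finset.univ.inf' Finset.univ_nonempty
    fun σ : Equiv.Perm (Fin n) => bandwidth (Matrix.of fun i j => M (σ i) (σ j))

section AuxBandwidth
open Finset Polynomial Matrix
open scoped Classical

private lemma bandwidth_eq_pos {n : ℕ} (M : Matrix (Fin n) (Fin n) ℂ)
    (h : (Finset.univ.filter fun q : Fin n × Fin n => M q.1 q.2 ≠ 0).Nonempty) :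
    bandwidth M = ((Finset.univ.filter fun q : Fin n × Fin n => M q.1 q.2 ≠ 0).sup' h fun q => ((q.2 : ℤ) - q.1)) +
      ((Finset.univ.filter fun q : Fin n × Fin n => M q.1 q.2 ≠ 0).sup' h fun q => ((q.1 : ℤ) - q.2)) := by
  unfold bandwidth
  rw [Finset.filter_congr_decidable, dif_pos h]

private lemma bandwidth_eq_zero {n : ℕ} (M : Matrix (Fin n) (Fin n) ℂ)
    (h : ¬ (Finset.univ.filter fun q : Fin n × Fin n => M q.1 q.2 ≠ 0).Nonempty) :
    bandwidth M = 0 := by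
  unfold bandwidth
  rw [Finset.filter_congr_decidable, dif_neg h]

private lemma bandwidth_aeval_le {n : ℕ} (A : Matrix (Fin n) (Fin n) ℂ)
    (hdiag : ∀ i, A i i ≠ 0) (m : ℕ) (p : Polynomial ℂ) (hdeg : p.natDegree ≤ m) :
    bandwidth (Polynomial.aeval A p) ≤ (m : ℤ) * bandwidth A := by
  set ΩP := Finset.univ.filter fun q : Fin n × Fin n => (Polynomial.aeval A p) q.1 q.2 ≠ 0 with hΩPdef
  by_cases hP : ΩP.Nonempty
  · -- n is positive since ΩP is nonempty
    obtain ⟨q0, -⟩ := id hP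
    haveI : Nonempty (Fin n) := ⟨q0.1⟩
    set ΩA := Finset.univ.filter fun q : Fin n × Fin n => A q.1 q.2 ≠ 0 with hΩAdef
    have hmemd : ∀ i : Fin n, (i, i) ∈ ΩA := fun i => by simp [hΩAdef, hdiag i]
    have hA : ΩA.Nonempty := ⟨_, hmemd (Classical.arbitrary _)⟩
    set U := ΩA.sup' hA (fun q => ((q.2 : ℤ) - q.1)) with hUdef
    set D := ΩA.sup' hA (fun q => ((q.1 : ℤ) - q.2)) with hDdef
    have hU0 : 0 ≤ U := by
      have := Finset.le_sup' (f := fun q : Fin n × Fin n => ((q.2 : ℤ) - q.1))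
        (hmemd (Classical.arbitrary _))
      simpa only [sub_self] using this
    have hD0 : 0 ≤ D := by
      have := Finset.le_sup' (f := fun q : Fin n × Fin n => ((q.1 : ℤ) - q.2))
        (hmemd (Classical.arbitrary _))
      simpa only [sub_self] using this
    have hpow : ∀ k : ℕ, ∀ i j : Fin n, (A ^ k) i j ≠ 0 →
        ((j : ℤ) - i ≤ k * U ∧ (i : ℤ) - j ≤ k * D) := by
      intro k
      induction k with
      | zero =>
        intro i j hij
        rw [pow_zero] at hij
        have : i = j := by
          by_contra hne
          exact hij (Matrix.one_apply_ne hne)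
        subst this
        simp
      | succ k ih =>
        intro i j hij
        rw [pow_succ, Matrix.mul_apply] at hij
        obtain ⟨l, -, hl⟩ := Finset.exists_ne_zero_of_sum_ne_zero hij
        obtain ⟨h1, h2⟩ := ih i l (left_ne_zero_of_mul hl)
        have hmem : (l, j) ∈ ΩA := by
          simp [hΩAdef, right_ne_zero_of_mul hl]
        have hu : (j : ℤ) - l ≤ U :=
          Finset.le_sup' (f := fun q : Fin n × Fin n => ((q.2 : ℤ) - q.1)) hmem
        have hd : (l : ℤ) - j ≤ D :=
          Finset.le_sup' (f := fun q : Fin n × Fin n => ((q.1 : ℤ) - q.2)) hmem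
        constructor
        · push_cast
          nlinarith
        · push_cast
          nlinarith
    have hentry : ∀ i j : Fin n, (Polynomial.aeval A p) i j ≠ 0 →
        ((j : ℤ) - i ≤ m * U ∧ (i : ℤ) - j ≤ m * D) := by
      intro i j hij
      rw [Polynomial.aeval_eq_sum_range' (Nat.lt_succ_of_le hdeg)] at hij
      rw [Matrix.sum_apply] at hij
      obtain ⟨k, hkmem, hk⟩ := Finset.exists_ne_zero_of_sum_ne_zero hij
      have hk' : (A ^ k) i j ≠ 0 := by
        intro h0
        apply hk
        simp [Matrix.smul_apply, h0]
      have hkm : (k : ℤ) ≤ m := by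
        have := Finset.mem_range.mp hkmem
        omega
      obtain ⟨h1, h2⟩ := hpow k i j hk'
      constructor
      · exact h1.trans (by nlinarith)
      · exact h2.trans (by nlinarith)
    rw [bandwidth_eq_pos _ hP, bandwidth_eq_pos _ hA, mul_add]
    apply add_le_add
    · apply Finset.sup'_le
      intro q hq
      have : (Polynomial.aeval A p) q.1 q.2 ≠ 0 := (Finset.mem_filter.mp hq).2
      exact (hentry q.1 q.2 this).1
    · apply Finset.sup'_le
      intro q hq
      have : (Polynomial.aeval A p) q.1 q.2 ≠ 0 := (Finset.mem_filter.mp hq).2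
      exact (hentry q.1 q.2 this).2
  · rw [bandwidth_eq_zero _ hP]
    rcases Nat.eq_zero_or_pos n with hn | hn
    · subst hn
      have h0 : ¬ (Finset.univ.filter fun q : Fin 0 × Fin 0 => A q.1 q.2 ≠ 0).Nonempty := by
        simp
      rw [bandwidth_eq_zero _ h0]
      simp
    · haveI : Nonempty (Fin n) := ⟨⟨0, hn⟩⟩
      set ΩA := Finset.univ.filter fun q : Fin n × Fin n => A q.1 q.2 ≠ 0 with hΩAdef
      have hmemd : ∀ i : Fin n, (i, i) ∈ ΩA := fun i => by simp [hΩAdef, hdiag i]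
      have hA : ΩA.Nonempty := ⟨_, hmemd (Classical.arbitrary _)⟩
      rw [bandwidth_eq_pos _ hA]
      have hU0 : (0:ℤ) ≤ ΩA.sup' hA (fun q => ((q.2 : ℤ) - q.1)) := by
        have := Finset.le_sup' (f := fun q : Fin n × Fin n => ((q.2 : ℤ) - q.1))
          (hmemd (Classical.arbitrary _))
        simpa only [sub_self] using this
      have hD0 : (0:ℤ) ≤ ΩA.sup' hA (fun q => ((q.1 : ℤ) - q.2)) := by
        have := Finset.le_sup' (f := fun q : Fin n × Fin n => ((q.1 : ℤ) - q.2))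
          (hmemd (Classical.arbitrary _))
        simpa only [sub_self] using this
      exact mul_nonneg (by positivity) (add_nonneg hU0 hD0)

end AuxBandwidth

/-- Lemma 3(a) of the paper: if all diagonal entries of `A` are nonzero and `p`
is a polynomial of degree at most `m`, then `l(p(A)) ≤ m·l(A)` and
`λ(p(A)) ≤ m·λ(A)`. -/
theorem bandwidth_polynomial_le {n : ℕ} (A : Matrix (Fin n) (Fin n) ℂ)
    (hdiag : ∀ i, A i i ≠ 0) (m : ℕ) (p : Polynomial ℂ) (hdeg : p.natDegree ≤ m) :
    bandwidth (Polynomial.aeval A p) ≤ (m : ℤ) * bandwidth A ∧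
      realBandwidth (Polynomial.aeval A p) ≤ (m : ℤ) * realBandwidth A := by
  refine ⟨bandwidth_aeval_le A hdiag m p hdeg, ?_⟩
  have hconj : ∀ σ : Equiv.Perm (Fin n),
      (Matrix.of fun i j => (Polynomial.aeval A p) (σ i) (σ j)) =
        Polynomial.aeval (Matrix.of fun i j => A (σ i) (σ j)) p := by
    intro σ
    have h1 : (Matrix.of fun i j => A (σ i) (σ j)) =
        (Matrix.reindexAlgEquiv ℂ ℂ σ.symm).toAlgHom A := by
      ext i j
      simp [Matrix.reindexAlgEquiv_apply, Matrix.reindex_apply, Matrix.submatrix_apply]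
    rw [h1, Polynomial.aeval_algHom_apply]
    ext i j
    simp [Matrix.reindexAlgEquiv_apply, Matrix.reindex_apply, Matrix.submatrix_apply]
  obtain ⟨σ0, -, hσ0⟩ := Finset.exists_mem_eq_inf' (Finset.univ_nonempty)
    (fun σ : Equiv.Perm (Fin n) => bandwidth (Matrix.of fun i j => A (σ i) (σ j)))
  calc realBandwidth (Polynomial.aeval A p)
      ≤ bandwidth (Matrix.of fun i j => (Polynomial.aeval A p) (σ0 i) (σ0 j)) :=
        Finset.inf'_le _ (Finset.mem_univ σ0)
    _ = bandwidth (Polynomial.aeval (Matrix.of fun i j => A (σ0 i) (σ0 j)) p) := by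
        rw [hconj]
    _ ≤ (m : ℤ) * bandwidth (Matrix.of fun i j => A (σ0 i) (σ0 j)) :=
        bandwidth_aeval_le _ (fun i => hdiag (σ0 i)) m p hdeg
    _ = (m : ℤ) * realBandwidth A := by rw [realBandwidth, ← hσ0]
end

section
/- Let A ∈ ℂ^{n×n} be nonzero with all diagonal entries nonzero, equip ℂ^{n×n} with the operator norm ‖·‖ induced by the Euclidean norm on ℂⁿ, set Y₀ = I − (1/(2‖A‖))A, and assume y₀ := ‖Y₀‖ < 1. Define S = √(2‖A‖)·Σ_{j=0}^{∞} (d_j/j!)(−Y₀)^j. Then S² = A, and for every ε > 0, β(ε, S) ≤ ν(ε, y₀)·λ(A), where ν(ε, y₀) = min{s ∈ ℕ : Σ_{j=s}^{∞} |d_j/j!| y₀^j ≤ ε/√2}. -/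
open scoped Matrix.Norms.L2Operator

/-- The `ε`-bandwidth `β(ε, M) = min { λ(M - B') : ‖B'‖ ≤ ε‖M‖ }`, where `‖·‖`
is the operator norm on `ℂ^{n×n}` induced by the Euclidean norm on `ℂⁿ`. -/
noncomputable def epsBandwidth {n : ℕ} (ε : ℝ) (M : Matrix (Fin n) (Fin n) ℂ) : ℤ :=
  sInf {b : ℤ | ∃ B' : Matrix (Fin n) (Fin n) ℂ,
    ‖B'‖ ≤ ε * ‖M‖ ∧ b = realBandwidth (M - B')}

/-- `d_j = ∏_{i=0}^{j-1} (1/2 - i)`, so that `d_j / j!` are the Taylor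
coefficients of `y ↦ (1 + y)^{1/2}` at `0`. -/
noncomputable def dcoef (j : ℕ) : ℝ := ∏ i ∈ Finset.range j, ((1 : ℝ) / 2 - i)

/-- The truncation index `ν(ε, y₀) = min { s ∈ ℕ : Σ_{j=s}^∞ |d_j/j!| y₀^j ≤ ε/√2 }`. -/
noncomputable def nuIndex (ε y₀ : ℝ) : ℕ :=
  sInf {s : ℕ |
    ∑' j : ℕ, |dcoef (s + j) / ((s + j).factorial : ℝ)| * y₀ ^ (s + j) ≤ ε / Real.sqrt 2}


/-! ### Auxiliary lemmas -/

section CoefLemmas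

/-- `c j = d_j / j!`, the Taylor coefficients of `(1+y)^{1/2}`. -/
noncomputable def ccoef (j : ℕ) : ℝ := dcoef j / (j.factorial : ℝ)

lemma ccoef_zero : ccoef 0 = 1 := by simp [ccoef, dcoef]

lemma ccoef_rec (j : ℕ) : ((j : ℝ) + 1) * ccoef (j + 1) = (1/2 - j) * ccoef j := by
  have h : dcoef (j+1) = dcoef j * (1/2 - j) := Finset.prod_range_succ _ _
  have hf : (j.factorial : ℝ) ≠ 0 := Nat.cast_ne_zero.2 j.factorial_ne_zero
  simp only [ccoef, h, Nat.factorial_succ, Nat.cast_mul, Nat.cast_add, Nat.cast_one]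
  field_simp

lemma abs_ccoef_le_one (j : ℕ) : |ccoef j| ≤ 1 := by
  induction j with
  | zero => simp [ccoef_zero]
  | succ j ih =>
    have hj : ((j:ℝ)+1) ≠ 0 := by positivity
    have : ccoef (j+1) = (1/2 - j) / ((j:ℝ)+1) * ccoef j := by
      have := ccoef_rec j; field_simp at this ⊢; linarith [this]
    rw [this, abs_mul, abs_div]
    have h1 : |(1:ℝ)/2 - j| ≤ (j:ℝ) + 1 := by
      rw [abs_le]; constructor <;> nlinarith [Nat.cast_nonneg (α := ℝ) j]
    have h2 : |((j:ℝ)+1)| = (j:ℝ)+1 := abs_of_pos (by positivity)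
    calc |(1:ℝ)/2 - j| / |((j:ℝ)+1)| * |ccoef j|
        ≤ 1 * 1 := by
          apply mul_le_mul _ ih (abs_nonneg _) zero_le_one
          rw [h2, div_le_one (by positivity)]; exact h1
      _ = 1 := by ring

/-- `u k = Σ_{i=0}^k c_i c_{k-i}`, the Cauchy-product coefficients. -/
noncomputable def ucoef (k : ℕ) : ℝ := ∑ i ∈ Finset.range (k+1), ccoef i * ccoef (k - i)

lemma vcoef_symm (m : ℕ) :
    2 * (∑ i ∈ Finset.range (m+1), (i:ℝ) * (ccoef i * ccoef (m - i))) = m * ucoef m := by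
  have hrefl := Finset.sum_range_reflect (fun i => (i:ℝ) * (ccoef i * ccoef (m - i))) (m+1)
  have h2 : ∑ j ∈ Finset.range (m+1), ((m - j : ℕ):ℝ) * (ccoef (m-j) * ccoef j)
      = ∑ i ∈ Finset.range (m+1), (i:ℝ) * (ccoef i * ccoef (m - i)) := by
    rw [← hrefl]
    apply Finset.sum_congr rfl
    intro j hj
    have hjm : j ≤ m := Nat.lt_succ_iff.mp (Finset.mem_range.mp hj)
    simp [Nat.sub_sub_self hjm, Nat.add_sub_cancel]
  rw [two_mul]
  nth_rewrite 2 [← h2]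
  rw [← Finset.sum_add_distrib, ucoef, Finset.mul_sum]
  apply Finset.sum_congr rfl
  intro j hj
  have hjm : j ≤ m := Nat.lt_succ_iff.mp (Finset.mem_range.mp hj)
  have : ((m - j : ℕ):ℝ) = (m:ℝ) - j := by
    rw [Nat.cast_sub hjm]
  rw [this]; ring

lemma ucoef_rec (k : ℕ) : ((k:ℝ)+1) * ucoef (k+1) = (1 - k) * ucoef k := by
  have expand : ((k:ℝ)+1) * ucoef (k+1)
      = 2 * (∑ i ∈ Finset.range (k+2), (i:ℝ) * (ccoef i * ccoef (k+1 - i))) := by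
    have := vcoef_symm (k+1)
    push_cast at this ⊢
    rw [ucoef] at this ⊢
    linarith [this]
  rw [expand]
  have shift : ∑ i ∈ Finset.range (k+2), (i:ℝ) * (ccoef i * ccoef (k+1 - i))
      = ∑ i ∈ Finset.range (k+1), ((i:ℝ)+1) * ccoef (i+1) * ccoef (k - i) := by
    rw [Finset.sum_range_succ' (fun i => (i:ℝ) * (ccoef i * ccoef (k+1 - i))) (k+1)]
    simp only [Nat.cast_zero, zero_mul, add_zero]
    apply Finset.sum_congr rfl
    intro i _
    have h1 : k + 1 - (i+1) = k - i := by omega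
    rw [h1]; push_cast; ring
  rw [shift]
  have repl : ∑ i ∈ Finset.range (k+1), ((i:ℝ)+1) * ccoef (i+1) * ccoef (k - i)
      = ∑ i ∈ Finset.range (k+1), (1/2 - (i:ℝ)) * (ccoef i * ccoef (k - i)) := by
    apply Finset.sum_congr rfl
    intro i _
    rw [ccoef_rec i]; ring
  rw [repl]
  have split : ∑ i ∈ Finset.range (k+1), (1/2 - (i:ℝ)) * (ccoef i * ccoef (k - i))
      = (1/2) * ucoef k - ∑ i ∈ Finset.range (k+1), (i:ℝ) * (ccoef i * ccoef (k - i)) := by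
    rw [ucoef, Finset.mul_sum, ← Finset.sum_sub_distrib]
    apply Finset.sum_congr rfl
    intro i _; ring
  rw [split]
  have := vcoef_symm k
  linarith [this]

lemma ucoef_zero : ucoef 0 = 1 := by simp [ucoef, ccoef_zero]

lemma ucoef_one : ucoef 1 = 1 := by
  have := ucoef_rec 0
  rw [ucoef_zero] at this
  push_cast at this
  linarith

lemma ucoef_eq_zero (k : ℕ) (hk : 2 ≤ k) : ucoef k = 0 := by
  induction k with
  | zero => omega
  | succ k ih =>
    rcases Nat.lt_or_ge k 2 with h | h
    · interval_cases k
      · omega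
      · have := ucoef_rec 1
        rw [ucoef_one] at this
        push_cast at this
        linarith
    · have h0 : ((k:ℝ)+1) * ucoef (k+1) = 0 := by rw [ucoef_rec k, ih h]; ring
      rcases mul_eq_zero.mp h0 with h' | h'
      · exact absurd h' (by positivity)
      · exact h'

end CoefLemmas

section BandwidthLemmas

lemma bandwidth_nonneg {n : ℕ} (M : Matrix (Fin n) (Fin n) ℂ) : 0 ≤ bandwidth M := by
  unfold bandwidth
  split_ifs with h
  · obtain ⟨p, hp⟩ := h
    calc (0:ℤ) = ((p.2 : ℤ) - p.1) + ((p.1 : ℤ) - p.2) := by ring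
      _ ≤ _ := add_le_add
        (Finset.le_sup' (fun p : Fin n × Fin n => ((p.2 : ℤ) - (p.1 : ℤ))) hp)
        (Finset.le_sup' (fun p : Fin n × Fin n => ((p.1 : ℤ) - (p.2 : ℤ))) hp)
  · exact le_refl 0

lemma realBandwidth_nonneg {n : ℕ} (M : Matrix (Fin n) (Fin n) ℂ) : 0 ≤ realBandwidth M :=
  Finset.le_inf' _ _ fun σ _ => bandwidth_nonneg _

lemma realBandwidth_le {n : ℕ} (M : Matrix (Fin n) (Fin n) ℂ) (σ : Equiv.Perm (Fin n)) :
    realBandwidth M ≤ bandwidth (Matrix.of fun i j => M (σ i) (σ j)) :=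
  Finset.inf'_le _ (Finset.mem_univ σ)

lemma bandwidth_le {n : ℕ} {M : Matrix (Fin n) (Fin n) ℂ} {p q : ℤ}
    (hp : 0 ≤ p) (hq : 0 ≤ q)
    (h : ∀ i j, M i j ≠ 0 → ((j:ℤ) - i ≤ p ∧ (i:ℤ) - j ≤ q)) :
    bandwidth M ≤ p + q := by
  unfold bandwidth
  split_ifs with hne
  · apply add_le_add
    · apply Finset.sup'_le
      intro b hb
      simp only [Finset.mem_filter] at hb
      exact (h b.1 b.2 hb.2).1
    · apply Finset.sup'_le
      intro b hb
      simp only [Finset.mem_filter] at hb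
      exact (h b.1 b.2 hb.2).2
  · exact add_nonneg hp hq

lemma exists_entry_bounds {n : ℕ} [Nonempty (Fin n)] (B : Matrix (Fin n) (Fin n) ℂ)
    (hd : ∀ i, B i i ≠ 0) :
    ∃ p q : ℤ, 0 ≤ p ∧ 0 ≤ q ∧
      (∀ i j, B i j ≠ 0 → ((j:ℤ) - i ≤ p ∧ (i:ℤ) - j ≤ q)) ∧ bandwidth B = p + q := by
  unfold bandwidth
  split_ifs with h
  · refine ⟨_, _, ?_, ?_, ?_, rfl⟩
    · have i := Classical.arbitrary (Fin n)
      refine le_trans ?_ (Finset.le_sup'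
        (fun p : Fin n × Fin n => ((p.2 : ℤ) - (p.1 : ℤ)))
        (b := (i, i))
        (by simp only [Finset.mem_filter]; exact ⟨Finset.mem_univ _, hd i⟩))
      simp
    · have i := Classical.arbitrary (Fin n)
      refine le_trans ?_ (Finset.le_sup'
        (fun p : Fin n × Fin n => ((p.1 : ℤ) - (p.2 : ℤ)))
        (b := (i, i))
        (by simp only [Finset.mem_filter]; exact ⟨Finset.mem_univ _, hd i⟩))
      simp
    · intro i j hij
      constructor
      · exact Finset.le_sup'
          (fun p : Fin n × Fin n => ((p.2 : ℤ) - (p.1 : ℤ)))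
          (b := (i, j))
          (by simp only [Finset.mem_filter]; exact ⟨Finset.mem_univ _, hij⟩)
      · exact Finset.le_sup'
          (fun p : Fin n × Fin n => ((p.1 : ℤ) - (p.2 : ℤ)))
          (b := (i, j))
          (by simp only [Finset.mem_filter]; exact ⟨Finset.mem_univ _, hij⟩)
  · exfalso
    have i := Classical.arbitrary (Fin n)
    refine h ⟨(i, i), ?_⟩
    simp only [Finset.mem_filter]
    exact ⟨Finset.mem_univ _, hd i⟩

lemma pow_entry_bound {n : ℕ} {B : Matrix (Fin n) (Fin n) ℂ} {p q : ℤ}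
    (h : ∀ i j, B i j ≠ 0 → ((j:ℤ) - i ≤ p ∧ (i:ℤ) - j ≤ q)) :
    ∀ (k : ℕ) (i j : Fin n), (B ^ k) i j ≠ 0 →
      ((j:ℤ) - i ≤ k * p ∧ (i:ℤ) - j ≤ k * q) := by
  intro k
  induction k with
  | zero =>
    intro i j hij
    rw [pow_zero] at hij
    have hij' : i = j := by
      by_contra hne
      exact hij (Matrix.one_apply_ne hne)
    subst hij'
    simp
  | succ k ih =>
    intro i j hij
    rw [pow_succ, Matrix.mul_apply] at hij
    obtain ⟨m, -, hm⟩ := Finset.exists_ne_zero_of_sum_ne_zero hij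
    have h1 := ih i m (left_ne_zero_of_mul hm)
    have h2 := h m j (right_ne_zero_of_mul hm)
    push_cast
    constructor
    · nlinarith [h1.1, h2.1]
    · nlinarith [h1.2, h2.2]

lemma rsmul_eq {n : ℕ} (r : ℝ) (M : Matrix (Fin n) (Fin n) ℂ) : r • M = (r : ℂ) • M := by
  ext i j
  simp [Matrix.smul_apply, Complex.real_smul]

end BandwidthLemmas

set_option maxHeartbeats 2000000 in
/-- Theorem 4 of the paper: with `Y₀ = I - A/(2‖A‖)` and `y₀ = ‖Y₀‖ < 1`, the
matrix `S = √(2‖A‖) Σ_j (d_j/j!)(-Y₀)^j` is a square root of `A`, and its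
`ε`-bandwidth is at most `ν(ε, y₀) λ(A)` for every `ε > 0`. -/
theorem epsBandwidth_sqrt_le {n : ℕ} (A : Matrix (Fin n) (Fin n) ℂ)
    (hA : A ≠ 0) (hdiag : ∀ i, A i i ≠ 0)
    (Y₀ : Matrix (Fin n) (Fin n) ℂ) (hY₀ : Y₀ = 1 - (1 / (2 * ‖A‖)) • A)
    (hy₀ : ‖Y₀‖ < 1)
    (S : Matrix (Fin n) (Fin n) ℂ)
    (hS : S = Real.sqrt (2 * ‖A‖) •
      ∑' j : ℕ, (dcoef j / (j.factorial : ℝ)) • (-Y₀) ^ j) :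
    S ^ 2 = A ∧
      ∀ ε > (0 : ℝ), epsBandwidth ε S ≤ (nuIndex ε ‖Y₀‖ : ℤ) * realBandwidth A := by
  -- dispose of the degenerate case `n = 0`
  rcases Nat.eq_zero_or_pos n with hn | hn
  · subst hn
    exact absurd (by ext i j; exact i.elim0) hA
  haveI : Nonempty (Fin n) := Fin.pos_iff_nonempty.mp hn
  haveI : Nontrivial (Matrix (Fin n) (Fin n) ℂ) := ⟨⟨A, 0, hA⟩⟩
  -- basic quantities
  have hx0 : (0:ℝ) ≤ ‖Y₀‖ := norm_nonneg _
  have hA0 : (0:ℝ) < ‖A‖ := norm_pos_iff.mpr hA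
  set r : ℝ := Real.sqrt (2 * ‖A‖) with hr
  have hr0 : 0 < r := Real.sqrt_pos.mpr (by positivity)
  have hrr : r * r = 2 * ‖A‖ := Real.mul_self_sqrt (by positivity)
  set f : ℕ → Matrix (Fin n) (Fin n) ℂ :=
    fun j => ((ccoef j : ℝ) : ℂ) • (-Y₀) ^ j with hf
  -- norm bounds on the terms of the series
  have hXpow : ∀ j : ℕ, ‖(-Y₀) ^ j‖ ≤ ‖Y₀‖ ^ j := by
    intro j
    rcases Nat.eq_zero_or_pos j with h | h
    · subst h; simp
    · calc ‖(-Y₀) ^ j‖ ≤ ‖-Y₀‖ ^ j := norm_pow_le' _ h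
        _ = ‖Y₀‖ ^ j := by rw [norm_neg]
  have hfnorm : ∀ j : ℕ, ‖f j‖ ≤ |ccoef j| * ‖Y₀‖ ^ j := by
    intro j
    rw [hf]
    simp only []
    rw [norm_smul, Complex.norm_real, Real.norm_eq_abs]
    exact mul_le_mul_of_nonneg_left (hXpow j) (abs_nonneg _)
  have habs : ∀ j : ℕ, |ccoef j| * ‖Y₀‖ ^ j ≤ ‖Y₀‖ ^ j := by
    intro j
    have h1 := abs_ccoef_le_one j
    have h2 : (0:ℝ) ≤ ‖Y₀‖ ^ j := pow_nonneg hx0 j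
    nlinarith
  have hgeom : Summable (fun j : ℕ => ‖Y₀‖ ^ j) := summable_geometric_of_lt_one hx0 hy₀
  have habs_summ : Summable (fun j : ℕ => |ccoef j| * ‖Y₀‖ ^ j) :=
    hgeom.of_nonneg_of_le (fun j => by positivity) habs
  have hnorm_summ : Summable (fun j : ℕ => ‖f j‖) :=
    hgeom.of_nonneg_of_le (fun j => norm_nonneg _) (fun j => (hfnorm j).trans (habs j))
  have hf_summ : Summable f := hnorm_summ.of_norm
  set T : Matrix (Fin n) (Fin n) ℂ := ∑' j : ℕ, f j with hT
  have hstat : (∑' j : ℕ, (dcoef j / (j.factorial : ℝ)) • (-Y₀) ^ j) = T := by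
    rw [hT]
    apply tsum_congr
    intro j
    rw [hf]
    simp only []
    rw [rsmul_eq]
    rfl
  have hS' : S = (r : ℂ) • T := by
    rw [hS, hstat, rsmul_eq]
  -- the Cauchy product
  have hcauchy : T * T = 1 + -Y₀ := by
    rw [hT, tsum_mul_tsum_eq_tsum_sum_antidiagonal_of_summable_norm hnorm_summ hnorm_summ]
    have hterm : ∀ k : ℕ, (∑ kl ∈ Finset.HasAntidiagonal.antidiagonal k, f kl.1 * f kl.2)
        = ((ucoef k : ℝ) : ℂ) • (-Y₀) ^ k := by
      intro k
      have hstep : ∀ kl ∈ Finset.HasAntidiagonal.antidiagonal k,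
          f kl.1 * f kl.2 = (((ccoef kl.1 * ccoef kl.2 : ℝ)) : ℂ) • (-Y₀) ^ k := by
        intro kl hkl
        have hsum : kl.1 + kl.2 = k := Finset.HasAntidiagonal.mem_antidiagonal.mp hkl
        rw [hf]
        simp only []
        rw [smul_mul_smul_comm, ← pow_add, hsum, ← Complex.ofReal_mul]
      rw [Finset.sum_congr rfl hstep, ← Finset.sum_smul]
      congr 1
      rw [← Complex.ofReal_sum]
      congr 1
      rw [Finset.Nat.sum_antidiagonal_eq_sum_range_succ (fun a b => ccoef a * ccoef b) k]
      rfl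
    rw [tsum_congr hterm, tsum_eq_sum (s := ({0, 1} : Finset ℕ))]
    · rw [Finset.sum_pair (by norm_num : (0:ℕ) ≠ 1)]
      rw [ucoef_zero, ucoef_one]
      simp
    · intro b hb
      have hb2 : 2 ≤ b := by
        simp only [Finset.mem_insert, Finset.mem_singleton] at hb
        omega
      rw [ucoef_eq_zero b hb2]
      simp
  have hsq : T * T = ((1 / (2 * ‖A‖) : ℝ) : ℂ) • A := by
    rw [hcauchy, hY₀, rsmul_eq]
    abel
  -- the square root property
  have hS2 : S ^ 2 = A := by
    rw [hS', pow_two, smul_mul_smul_comm, hsq, smul_smul]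
    have hone : ((r:ℂ)) * (r:ℂ) * ((1 / (2 * ‖A‖) : ℝ) : ℂ) = 1 := by
      rw [← Complex.ofReal_mul, ← Complex.ofReal_mul, hrr]
      rw [show (2 * ‖A‖) * (1 / (2 * ‖A‖)) = 1 by field_simp]
      exact Complex.ofReal_one
    rw [hone, one_smul]
  -- lower bound on `‖T‖` and `‖S‖`
  have hTT_norm : ‖T * T‖ = 1 / 2 := by
    rw [hsq, norm_smul, Complex.norm_real, Real.norm_eq_abs,
      abs_of_pos (by positivity : (0:ℝ) < 1 / (2 * ‖A‖))]
    field_simp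
  have hTn : 1 / Real.sqrt 2 ≤ ‖T‖ := by
    have h2 : ‖T * T‖ ≤ ‖T‖ * ‖T‖ := norm_mul_le T T
    have h3 : (1:ℝ)/2 ≤ ‖T‖ ^ 2 := by rw [pow_two]; rw [hTT_norm] at h2; linarith
    have h4 := Real.sqrt_le_sqrt h3
    rw [Real.sqrt_sq (norm_nonneg T)] at h4
    have h5 : Real.sqrt (1/2) = 1 / Real.sqrt 2 := by
      rw [one_div, one_div, Real.sqrt_inv]
    linarith [h5 ▸ h4]
  have hSn : ‖S‖ = r * ‖T‖ := by
    rw [hS', norm_smul, Complex.norm_real, Real.norm_eq_abs, abs_of_pos hr0]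
  refine ⟨hS2, ?_⟩
  -- the bandwidth estimate
  intro ε hε
  set s : ℕ := nuIndex ε ‖Y₀‖ with hsdef
  -- the defining property of `nuIndex`
  have htail_summ : ∀ t : ℕ, Summable
      (fun j : ℕ => |ccoef (t + j)| * ‖Y₀‖ ^ (t + j)) :=
    fun t => habs_summ.comp_injective (add_right_injective t)
  have hgeom_summ : ∀ t : ℕ, Summable (fun j : ℕ => ‖Y₀‖ ^ (t + j)) :=
    fun t => hgeom.comp_injective (add_right_injective t)
  have hset : {u : ℕ |
      ∑' j : ℕ, |dcoef (u + j) / ((u + j).factorial : ℝ)| * ‖Y₀‖ ^ (u + j)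
        ≤ ε / Real.sqrt 2}.Nonempty := by
    have h1x : (0:ℝ) < 1 - ‖Y₀‖ := by linarith
    have hpos : (0:ℝ) < ε / Real.sqrt 2 * (1 - ‖Y₀‖) := by positivity
    obtain ⟨t, ht⟩ := exists_pow_lt_of_lt_one hpos hy₀
    refine ⟨t, ?_⟩
    show ∑' j : ℕ, |ccoef (t + j)| * ‖Y₀‖ ^ (t + j) ≤ ε / Real.sqrt 2
    have hbound : ∑' j : ℕ, |ccoef (t + j)| * ‖Y₀‖ ^ (t + j)
        ≤ ∑' j : ℕ, ‖Y₀‖ ^ (t + j) :=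
      Summable.tsum_le_tsum (fun j => habs (t + j)) (htail_summ t) (hgeom_summ t)
    have hgeo : ∑' j : ℕ, ‖Y₀‖ ^ (t + j) = ‖Y₀‖ ^ t * (1 - ‖Y₀‖)⁻¹ := by
      simp_rw [pow_add]
      rw [tsum_mul_left, tsum_geometric_of_lt_one hx0 hy₀]
    have : ‖Y₀‖ ^ t * (1 - ‖Y₀‖)⁻¹ ≤ ε / Real.sqrt 2 := by
      rw [← div_eq_mul_inv, div_le_iff₀ h1x]
      linarith
    linarith [hbound, hgeo ▸ hbound]
  have hs_mem : ∑' j : ℕ, |ccoef (s + j)| * ‖Y₀‖ ^ (s + j) ≤ ε / Real.sqrt 2 :=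
    Nat.sInf_mem hset
  -- the truncation
  set P : Matrix (Fin n) (Fin n) ℂ := ∑ j ∈ Finset.range s, f j with hP
  set Ps : Matrix (Fin n) (Fin n) ℂ := (r : ℂ) • P with hPs
  have hsplit : S - Ps = (r : ℂ) • (∑' j : ℕ, f (j + s)) := by
    have hdecomp := Summable.sum_add_tsum_nat_add (f := f) s hf_summ
    rw [hS', hPs, ← smul_sub]
    congr 1
    rw [hT, ← hdecomp, hP]
    abel
  have htail_norm : ‖∑' j : ℕ, f (j + s)‖ ≤ ε / Real.sqrt 2 := by
    have h1 : ‖∑' j : ℕ, f (j + s)‖ ≤ ∑' j : ℕ, ‖f (j + s)‖ :=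
      norm_tsum_le_tsum_norm (hnorm_summ.comp_injective (add_left_injective s))
    have h2 : ∑' j : ℕ, ‖f (j + s)‖ ≤ ∑' j : ℕ, |ccoef (s + j)| * ‖Y₀‖ ^ (s + j) := by
      apply Summable.tsum_le_tsum _ (hnorm_summ.comp_injective (add_left_injective s)) (htail_summ s)
      intro j
      show ‖f (j + s)‖ ≤ |ccoef (s + j)| * ‖Y₀‖ ^ (s + j)
      rw [add_comm j s]
      exact hfnorm (s + j)
    linarith [hs_mem]
  have hnormB' : ‖S - Ps‖ ≤ ε * ‖S‖ := by
    rw [hsplit, norm_smul, Complex.norm_real, Real.norm_eq_abs, abs_of_pos hr0]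
    calc r * ‖∑' j : ℕ, f (j + s)‖ ≤ r * (ε / Real.sqrt 2) :=
          mul_le_mul_of_nonneg_left htail_norm hr0.le
      _ = ε * (r * (1 / Real.sqrt 2)) := by ring
      _ ≤ ε * ‖S‖ := by
          rw [hSn]
          exact mul_le_mul_of_nonneg_left
            (mul_le_mul_of_nonneg_left hTn hr0.le) hε.le
  -- choose an optimal permutation for `A`
  obtain ⟨σ₀, -, hσ₀⟩ := Finset.exists_mem_eq_inf' (Finset.univ_nonempty)
    (fun σ : Equiv.Perm (Fin n) => bandwidth (Matrix.of fun i j => A (σ i) (σ j)))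
  set B : Matrix (Fin n) (Fin n) ℂ := Matrix.of fun i j => A (σ₀ i) (σ₀ j) with hB
  have hRB : realBandwidth A = bandwidth B := hσ₀
  have hBdiag : ∀ i, B i i ≠ 0 := fun i => hdiag (σ₀ i)
  obtain ⟨p, q, hp, hq, hpq, hband⟩ := exists_entry_bounds B hBdiag
  set φ : Matrix (Fin n) (Fin n) ℂ ≃ₐ[ℂ] Matrix (Fin n) (Fin n) ℂ :=
    Matrix.reindexAlgEquiv ℂ ℂ σ₀.symm with hφ
  have hφ_apply : ∀ (M : Matrix (Fin n) (Fin n) ℂ) i j, (φ M) i j = M (σ₀ i) (σ₀ j) := by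
    intro M i j
    rw [hφ]
    simp [Matrix.reindexAlgEquiv_apply, Matrix.reindex_apply, Matrix.submatrix_apply]
  have hφA : φ A = B := by
    ext i j
    rw [hφ_apply, hB]
    rfl
  have hφX : φ (-Y₀) = ((1 / (2 * ‖A‖) : ℝ) : ℂ) • B - 1 := by
    have hXe : -Y₀ = ((1 / (2 * ‖A‖) : ℝ) : ℂ) • A - 1 := by
      rw [hY₀, rsmul_eq]
      abel
    rw [hXe, map_sub, map_smul, map_one, hφA]
  have hφXbound : ∀ i j, (φ (-Y₀)) i j ≠ 0 → ((j:ℤ) - i ≤ p ∧ (i:ℤ) - j ≤ q) := by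
    intro i j hij
    by_cases hij' : i = j
    · subst hij'
      constructor <;> simpa
    · apply hpq
      rw [hφX] at hij
      simp only [Matrix.sub_apply, Matrix.smul_apply, Matrix.one_apply_ne hij',
        sub_zero, smul_eq_mul] at hij
      intro h0
      apply hij
      rw [h0, mul_zero]
  have hpow := pow_entry_bound hφXbound
  have hφPs : φ Ps = (r : ℂ) • ∑ j ∈ Finset.range s, ((ccoef j : ℝ) : ℂ) • (φ (-Y₀)) ^ j := by
    rw [hPs, map_smul, hP]
    congr 1
    rw [map_sum]
    apply Finset.sum_congr rfl
    intro j _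
    rw [hf]
    simp only []
    rw [map_smul, map_pow]
  have hPs_bound : ∀ i j, (φ Ps) i j ≠ 0 →
      ((j:ℤ) - i ≤ (s:ℤ) * p ∧ (i:ℤ) - j ≤ (s:ℤ) * q) := by
    intro i j hij
    rw [hφPs] at hij
    rw [Matrix.smul_apply] at hij
    have hsum_ne : (∑ k ∈ Finset.range s, ((ccoef k : ℝ) : ℂ) • (φ (-Y₀)) ^ k) i j ≠ 0 := by
      intro h0
      apply hij
      rw [h0, smul_zero]
    rw [Matrix.sum_apply] at hsum_ne
    obtain ⟨k, hk, hkne⟩ := Finset.exists_ne_zero_of_sum_ne_zero hsum_ne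
    have hkX : ((φ (-Y₀)) ^ k) i j ≠ 0 := by
      intro h0
      apply hkne
      rw [Matrix.smul_apply, h0, smul_zero]
    have hks : (k:ℤ) ≤ (s:ℤ) := by
      exact_mod_cast (Finset.mem_range.mp hk).le
    obtain ⟨hb1, hb2⟩ := hpow k i j hkX
    constructor
    · exact hb1.trans (mul_le_mul_of_nonneg_right hks hp)
    · exact hb2.trans (mul_le_mul_of_nonneg_right hks hq)
  have hofPs : Matrix.of (fun i j => Ps (σ₀ i) (σ₀ j)) = φ Ps := by
    ext i j
    rw [hφ_apply]
    rfl
  have hRBPs : realBandwidth Ps ≤ (s:ℤ) * realBandwidth A := by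
    calc realBandwidth Ps ≤ bandwidth (Matrix.of fun i j => Ps (σ₀ i) (σ₀ j)) :=
          realBandwidth_le Ps σ₀
      _ = bandwidth (φ Ps) := by rw [hofPs]
      _ ≤ (s:ℤ) * p + (s:ℤ) * q :=
          bandwidth_le (mul_nonneg (Int.natCast_nonneg s) hp)
            (mul_nonneg (Int.natCast_nonneg s) hq) hPs_bound
      _ = (s:ℤ) * (p + q) := by ring
      _ = (s:ℤ) * realBandwidth A := by rw [hRB, hband]
  -- conclude via the definition of `epsBandwidth`
  have hmemb : realBandwidth Ps ∈ {b : ℤ | ∃ B' : Matrix (Fin n) (Fin n) ℂ,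
      ‖B'‖ ≤ ε * ‖S‖ ∧ b = realBandwidth (S - B')} :=
    ⟨S - Ps, hnormB', by rw [sub_sub_cancel]⟩
  have hbdd : BddBelow {b : ℤ | ∃ B' : Matrix (Fin n) (Fin n) ℂ,
      ‖B'‖ ≤ ε * ‖S‖ ∧ b = realBandwidth (S - B')} := by
    refine ⟨0, ?_⟩
    rintro b ⟨B', -, rfl⟩
    exact realBandwidth_nonneg _
  calc epsBandwidth ε S ≤ realBandwidth Ps := csInf_le hbdd hmemb
    _ ≤ (s:ℤ) * realBandwidth A := hRBPs
end

section
/- Let A ∈ ℂ^{n×n} be nonzero with all diagonal entries nonzero, equip ℂ^{n×n} with the operator norm ‖·‖ induced by the Euclidean norm on ℂⁿ, and let α > 0. Define X₀ = √(α/‖A‖)·A, Y₀ = I − (α/‖A‖)A, and iterate Xₖ₊₁ = Xₖ(I + (1/2)Yₖ), Yₖ₊₁ = Yₖ²((3/4)I + (1/4)Yₖ). Then for every j ∈ ℕ, λ(X_j) ≤ ((3^j + 1)/2)·λ(A). -/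
open scoped Matrix.Norms.L2Operator

/-- `M` is supported in the band `-d ≤ j - i ≤ c` after permuting by `σ`. -/
def MBand {n : ℕ} (σ : Equiv.Perm (Fin n)) (c d : ℤ)
    (M : Matrix (Fin n) (Fin n) ℂ) : Prop :=
  ∀ i j : Fin n, M (σ i) (σ j) ≠ 0 →
    ((j : ℤ) - (i : ℤ) ≤ c ∧ (i : ℤ) - (j : ℤ) ≤ d)

namespace MBand

variable {n : ℕ} {σ : Equiv.Perm (Fin n)} {c d c' d' c₁ d₁ c₂ d₂ : ℤ}
  {M N : Matrix (Fin n) (Fin n) ℂ}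

lemma mono (h : MBand σ c d M) (hc : c ≤ c') (hd : d ≤ d') : MBand σ c' d' M :=
  fun i j hij => ⟨(h i j hij).1.trans hc, (h i j hij).2.trans hd⟩

lemma add (hM : MBand σ c d M) (hN : MBand σ c d N) : MBand σ c d (M + N) := by
  intro i j hij
  by_cases hM0 : M (σ i) (σ j) = 0
  · exact hN i j (by simpa [Matrix.add_apply, hM0] using hij)
  · exact hM i j hM0

lemma neg (hM : MBand σ c d M) : MBand σ c d (-M) := by
  intro i j hij
  exact hM i j (by simpa [Matrix.neg_apply, neg_ne_zero] using hij)

lemma smul (r : ℝ) (hM : MBand σ c d M) : MBand σ c d (r • M) := by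
  intro i j hij
  refine hM i j fun h0 => hij ?_
  simp [Matrix.smul_apply, h0]

lemma one (hc : 0 ≤ c) (hd : 0 ≤ d) : MBand σ c d 1 := by
  intro i j hij
  have hij' : i = j := by
    by_contra hne
    exact hij (Matrix.one_apply_ne (fun h => hne (σ.injective h)))
  subst hij'
  simp [hc, hd]

lemma mul (hM : MBand σ c₁ d₁ M) (hN : MBand σ c₂ d₂ N) :
    MBand σ (c₁ + c₂) (d₁ + d₂) (M * N) := by
  intro i j hij
  rw [Matrix.mul_apply] at hij
  obtain ⟨k, -, hk⟩ := Finset.exists_ne_zero_of_sum_ne_zero hij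
  have h1 := hM i (σ.symm k)
    (by rw [σ.apply_symm_apply]; exact left_ne_zero_of_mul hk)
  have h2 := hN (σ.symm k) j
    (by rw [σ.apply_symm_apply]; exact right_ne_zero_of_mul hk)
  obtain ⟨h1a, h1b⟩ := h1
  obtain ⟨h2a, h2b⟩ := h2
  constructor <;> omega

end MBand

lemma bandwidth_le_of_band {n : ℕ} {σ : Equiv.Perm (Fin n)} {c d : ℤ}
    {M : Matrix (Fin n) (Fin n) ℂ} (hc : 0 ≤ c) (hd : 0 ≤ d)
    (h : MBand σ c d M) :
    bandwidth (Matrix.of fun i j => M (σ i) (σ j)) ≤ c + d := by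
  letI : DecidablePred (fun p : Fin n × Fin n =>
      (Matrix.of fun i j => M (σ i) (σ j)) p.1 p.2 ≠ 0) :=
    fun a => Classical.dec _
  unfold bandwidth
  split_ifs with h'
  · refine add_le_add (Finset.sup'_le _ _ ?_) (Finset.sup'_le _ _ ?_) <;>
    · intro p hp
      have hmem : M (σ p.1) (σ p.2) ≠ 0 := by
        simpa using (Finset.mem_filter.mp hp).2
      first
        | exact (h p.1 p.2 hmem).1
        | exact (h p.1 p.2 hmem).2
  · exact add_nonneg hc hd

lemma exists_band_eq {n : ℕ} [Nonempty (Fin n)] (σ : Equiv.Perm (Fin n))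
    (A : Matrix (Fin n) (Fin n) ℂ) (hdiag : ∀ i, A i i ≠ 0) :
    ∃ c d : ℤ, 0 ≤ c ∧ 0 ≤ d ∧ MBand σ c d A ∧
      bandwidth (Matrix.of fun i j => A (σ i) (σ j)) = c + d := by
  obtain ⟨i₀⟩ := ‹Nonempty (Fin n)›
  letI : DecidablePred (fun p : Fin n × Fin n =>
      (Matrix.of fun i j => A (σ i) (σ j)) p.1 p.2 ≠ 0) :=
    fun a => Classical.dec _
  unfold bandwidth
  split_ifs with h
  · have hmem0 : (i₀, i₀) ∈ Finset.univ.filter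
        (fun p : Fin n × Fin n =>
          (Matrix.of fun i j => A (σ i) (σ j)) p.1 p.2 ≠ 0) := by
      exact Finset.mem_filter.mpr ⟨Finset.mem_univ _, by simpa using hdiag (σ i₀)⟩
    refine ⟨_, _, ?_, ?_, ?_, rfl⟩
    · simpa using Finset.le_sup' (fun p : Fin n × Fin n =>
        ((p.2 : ℤ) - (p.1 : ℤ))) hmem0
    · simpa using Finset.le_sup' (fun p : Fin n × Fin n =>
        ((p.1 : ℤ) - (p.2 : ℤ))) hmem0
    · intro i j hij
      have hmem : (i, j) ∈ Finset.univ.filter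
          (fun p : Fin n × Fin n =>
            (Matrix.of fun i j => A (σ i) (σ j)) p.1 p.2 ≠ 0) := by
        exact Finset.mem_filter.mpr ⟨Finset.mem_univ _, by simpa using hij⟩
      exact ⟨Finset.le_sup' (fun p : Fin n × Fin n =>
          ((p.2 : ℤ) - (p.1 : ℤ))) hmem,
        Finset.le_sup' (fun p : Fin n × Fin n =>
          ((p.1 : ℤ) - (p.2 : ℤ))) hmem⟩
  · exact absurd ⟨(i₀, i₀), Finset.mem_filter.mpr ⟨Finset.mem_univ _, by simpa using hdiag (σ i₀)⟩⟩ h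

lemma three_pow_succ_div (j : ℕ) :
    ((3 ^ (j + 1) + 1) / 2 : ℤ) = (3 ^ j + 1) / 2 + 3 ^ j := by
  have h : ((3 : ℤ) ^ (j + 1) + 1) = (3 ^ j + 1) + 3 ^ j * 2 := by ring
  rw [h, Int.add_mul_ediv_right _ _ (by norm_num : (2 : ℤ) ≠ 0)]

/-- Theorem 5 of the paper: for the SIAI iterates started from
`X₀ = √(α/‖A‖) A`, `Y₀ = I - (α/‖A‖) A` (with `‖·‖` the operator norm induced
by the Euclidean norm), the real bandwidth of `X_j` is at most
`((3^j + 1)/2) λ(A)`. -/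
theorem realBandwidth_siai_iterate_le {n : ℕ} (A : Matrix (Fin n) (Fin n) ℂ)
    (hA : A ≠ 0) (hdiag : ∀ i, A i i ≠ 0) (α : ℝ) (hα : 0 < α)
    (X Y : ℕ → Matrix (Fin n) (Fin n) ℂ)
    (hX0 : X 0 = Real.sqrt (α / ‖A‖) • A)
    (hY0 : Y 0 = 1 - (α / ‖A‖) • A)
    (hX : ∀ k, X (k + 1) = X k * (1 + (1/2 : ℝ) • Y k))
    (hY : ∀ k, Y (k + 1) = (Y k) ^ 2 *
      ((3/4 : ℝ) • (1 : Matrix (Fin n) (Fin n) ℂ) + (1/4 : ℝ) • Y k)) :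
    ∀ j : ℕ, realBandwidth (X j) ≤ ((3 ^ j + 1) / 2 : ℤ) * realBandwidth A := by
  classical
  have hn : Nonempty (Fin n) := by
    rcases Nat.eq_zero_or_pos n with h | h
    · subst h
      exact absurd (Subsingleton.elim A 0) hA
    · exact ⟨⟨0, h⟩⟩
  obtain ⟨σ, -, hσ⟩ := Finset.exists_mem_eq_inf'
    (Finset.univ_nonempty (α := Equiv.Perm (Fin n)))
    (fun σ : Equiv.Perm (Fin n) =>
      bandwidth (Matrix.of fun i j => A (σ i) (σ j)))
  obtain ⟨a, b, ha, hb, hband, heq⟩ := exists_band_eq σ A hdiag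
  have hRA : realBandwidth A = a + b := hσ.trans heq
  have main : ∀ j : ℕ,
      MBand σ (((3 ^ j + 1) / 2) * a) (((3 ^ j + 1) / 2) * b) (X j) ∧
      MBand σ ((3 ^ j : ℤ) * a) ((3 ^ j : ℤ) * b) (Y j) := by
    intro j
    induction j with
    | zero =>
      constructor
      · have h1 : (((3 : ℤ) ^ 0 + 1) / 2) = 1 := by norm_num
        rw [h1, one_mul, one_mul, hX0]
        exact hband.smul _
      · have h1 : ((3 : ℤ) ^ 0) = 1 := by norm_num
        rw [h1, one_mul, one_mul, hY0, sub_eq_add_neg]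
        exact (MBand.one ha hb).add ((hband.smul _).neg)
    | succ k ih =>
      have hpa : (0 : ℤ) ≤ 3 ^ k * a := by positivity
      have hpb : (0 : ℤ) ≤ 3 ^ k * b := by positivity
      constructor
      · rw [hX k]
        have h2 : MBand σ ((3 ^ k : ℤ) * a) ((3 ^ k : ℤ) * b)
            (1 + (1/2 : ℝ) • Y k) :=
          (MBand.one hpa hpb).add (ih.2.smul _)
        refine (ih.1.mul h2).mono (le_of_eq ?_) (le_of_eq ?_) <;>
          · rw [three_pow_succ_div]; ring
      · rw [hY k, pow_two]
        have h3 : MBand σ ((3 ^ k : ℤ) * a) ((3 ^ k : ℤ) * b)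
            ((3/4 : ℝ) • (1 : Matrix (Fin n) (Fin n) ℂ) + (1/4 : ℝ) • Y k) :=
          ((MBand.one hpa hpb).smul _).add (ih.2.smul _)
        refine ((ih.2.mul ih.2).mul h3).mono (le_of_eq ?_) (le_of_eq ?_) <;>
          · rw [pow_succ]; ring
  intro j
  have he : (1 : ℤ) ≤ (3 ^ j + 1) / 2 := by
    have h3 : (1 : ℤ) ≤ 3 ^ j := one_le_pow₀ (by norm_num)
    omega
  have he0 : (0 : ℤ) ≤ (3 ^ j + 1) / 2 := le_trans zero_le_one he
  have hba := bandwidth_le_of_band (mul_nonneg he0 ha) (mul_nonneg he0 hb)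
    (main j).1
  calc realBandwidth (X j)
      ≤ bandwidth (Matrix.of fun i j' => X j (σ i) (σ j')) :=
        Finset.inf'_le _ (Finset.mem_univ σ)
    _ ≤ ((3 ^ j + 1) / 2) * a + ((3 ^ j + 1) / 2) * b := hba
    _ = ((3 ^ j + 1) / 2) * (a + b) := by ring
    _ = ((3 ^ j + 1) / 2 : ℤ) * realBandwidth A := by rw [hRA]
end

section
/- Let A ∈ ℂ^{n×n} be nonzero, let α > 0, set X₀ = √(α/‖A‖)·A and Y₀ = I − (α/‖A‖)A (for any fixed norm ‖·‖ on ℂ^{n×n}), and iterate Xₖ₊₁ = Xₖ(I + (1/2)Yₖ), Yₖ₊₁ = Yₖ²((3/4)I + (1/4)Yₖ). Then for every j ∈ ℕ there exist polynomials p_j and q_j over ℂ with deg p_j ≤ (3^j + 1)/2 and deg q_j ≤ 3^j such that X_j = p_j(A) and Y_j = q_j(A). -/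
/-- Structural fact behind Theorem 5 of the paper: each SIAI iterate
`X_j`, `Y_j`, started from `X₀ = √(α/‖A‖) A` and `Y₀ = I - (α/‖A‖) A`
(for any fixed norm `‖·‖` on `ℂ^{n×n}`), is a polynomial in `A` of degree at
most `(3^j + 1)/2`, resp. `3^j`. -/
theorem siai_iterates_are_polynomials_in_A {n : ℕ} (A : Matrix (Fin n) (Fin n) ℂ)
    (hA : A ≠ 0) (α : ℝ) (hα : 0 < α)
    (matnorm : Matrix (Fin n) (Fin n) ℂ → ℝ)
    (X Y : ℕ → Matrix (Fin n) (Fin n) ℂ)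
    (hX0 : X 0 = Real.sqrt (α / matnorm A) • A)
    (hY0 : Y 0 = 1 - (α / matnorm A) • A)
    (hX : ∀ k, X (k + 1) = X k * (1 + (1/2 : ℝ) • Y k))
    (hY : ∀ k, Y (k + 1) = (Y k) ^ 2 *
      ((3/4 : ℝ) • (1 : Matrix (Fin n) (Fin n) ℂ) + (1/4 : ℝ) • Y k)) :
    ∀ j : ℕ, ∃ p q : Polynomial ℂ,
      p.natDegree ≤ (3 ^ j + 1) / 2 ∧ q.natDegree ≤ 3 ^ j ∧
      X j = Polynomial.aeval A p ∧ Y j = Polynomial.aeval A q := by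
  have smul_eq : ∀ (r : ℝ) (M : Matrix (Fin n) (Fin n) ℂ), r • M = (r : ℂ) • M := by
    intro r M
    rw [← algebraMap_smul ℂ r M]
    rfl
  intro j
  induction j with
  | zero =>
    refine ⟨Polynomial.C ((Real.sqrt (α / matnorm A) : ℂ)) * Polynomial.X,
      1 - Polynomial.C (((α / matnorm A : ℝ) : ℂ)) * Polynomial.X, ?_, ?_, ?_, ?_⟩
    · simpa using Polynomial.natDegree_C_mul_le ((Real.sqrt (α / matnorm A) : ℂ)) Polynomial.X
    · calc (1 - Polynomial.C (((α / matnorm A : ℝ) : ℂ)) * Polynomial.X).natDegree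
          ≤ max (1 : Polynomial ℂ).natDegree
              (Polynomial.C (((α / matnorm A : ℝ) : ℂ)) * Polynomial.X).natDegree :=
            Polynomial.natDegree_sub_le _ _
        _ ≤ 3 ^ 0 := by
            simp only [Polynomial.natDegree_one, pow_zero]
            simpa using Polynomial.natDegree_C_mul_le ((α / matnorm A : ℝ) : ℂ) Polynomial.X
    · rw [hX0, smul_eq]
      simp [Algebra.smul_def]
    · rw [hY0, smul_eq]
      simp [Algebra.smul_def, sub_eq_add_neg]
  | succ k ih =>
    obtain ⟨p, q, hp, hq, hXp, hYq⟩ := ih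
    have hodd : Odd (3 ^ k) := Odd.pow ⟨1, by norm_num⟩
    obtain ⟨m, hm⟩ := hodd
    refine ⟨p * (1 + Polynomial.C (1/2 : ℂ) * q),
      q ^ 2 * (Polynomial.C (3/4 : ℂ) + Polynomial.C (1/4 : ℂ) * q), ?_, ?_, ?_, ?_⟩
    · calc (p * (1 + Polynomial.C (1/2 : ℂ) * q)).natDegree
          ≤ p.natDegree + (1 + Polynomial.C (1/2 : ℂ) * q).natDegree :=
            Polynomial.natDegree_mul_le
        _ ≤ p.natDegree + max (1 : Polynomial ℂ).natDegree
              (Polynomial.C (1/2 : ℂ) * q).natDegree :=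
            Nat.add_le_add_left (Polynomial.natDegree_add_le _ _) _
        _ ≤ (3 ^ k + 1) / 2 + max 0 q.natDegree := by
            gcongr
            · simp
            · exact Polynomial.natDegree_C_mul_le _ _
        _ ≤ (3 ^ k + 1) / 2 + 3 ^ k := by simpa using hq
        _ ≤ (3 ^ (k + 1) + 1) / 2 := by
            rw [pow_succ]
            omega
    · calc (q ^ 2 * (Polynomial.C (3/4 : ℂ) + Polynomial.C (1/4 : ℂ) * q)).natDegree
          ≤ (q ^ 2).natDegree + (Polynomial.C (3/4 : ℂ) + Polynomial.C (1/4 : ℂ) * q).natDegree :=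
            Polynomial.natDegree_mul_le
        _ ≤ 2 * q.natDegree + max (Polynomial.C (3/4 : ℂ)).natDegree
              (Polynomial.C (1/4 : ℂ) * q).natDegree := by
            gcongr
            · exact Polynomial.natDegree_pow_le
            · exact Polynomial.natDegree_add_le _ _
        _ ≤ 2 * 3 ^ k + max 0 q.natDegree := by
            gcongr
            · simp
            · exact Polynomial.natDegree_C_mul_le _ _
        _ ≤ 2 * 3 ^ k + 3 ^ k := by simpa using hq
        _ ≤ 3 ^ (k + 1) := by rw [pow_succ]; omega
    · rw [hX k, hXp, hYq, smul_eq]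
      push_cast
      simp [Algebra.smul_def, mul_add]
    · rw [hY k, hYq, smul_eq, smul_eq]
      push_cast
      simp [Algebra.smul_def, mul_add]
end

section
/- Let B be a complex unital Banach algebra with submultiplicative norm, let A, S ∈ B with S² = A, and let Y ∈ B with ‖Y‖ ≤ 1. Define X = S · Σ_{j=0}^{∞} (d_j/j!)(−Y)^j (the series converges absolutely). Then ‖S‖ ≥ max( √‖A‖ , ‖X‖ / (2 − √(1 − ‖Y‖)) ). -/
open Finset Filter Topology

theorem Ring.choose_half_eq_dcoef_div_factorial (j : ℕ) :
    Ring.choose (1 / 2 : ℝ) j = dcoef j / j.factorial := by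
  rw [Ring.choose_eq_smul, ← Polynomial.aeval_eq_smeval, ← Polynomial.eval_map_algebraMap,
    descPochhammer_map, descPochhammer_eval_eq_prod_range, smul_eq_mul, dcoef, inv_mul_eq_div]

theorem hasSum_dcoef_div_factorial_mul_neg_pow {t : ℝ} (ht : |t| < 1) :
    HasSum (fun j ↦ dcoef j / j.factorial * (-t) ^ j) √(1 - t) := by
  have h := (Real.one_add_rpow_hasFPowerSeriesOnBall_zero (a := 1 / 2)).hasSum (y := -t) (by
    rwa [mem_eball_zero_iff, ← ofReal_norm, ENNReal.ofReal_lt_one, norm_neg])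
  simp only [binomialSeries_apply, List.ofFn_const, List.prod_replicate, zero_add, smul_eq_mul,
    Ring.choose_half_eq_dcoef_div_factorial] at h
  rwa [Real.sqrt_eq_rpow, sub_eq_add_neg]

theorem abs_dcoef_succ (j : ℕ) : |dcoef (j + 1)| = -(dcoef (j + 1) * (-1) ^ (j + 1)) := by
  suffices h : dcoef (j + 1) * (-1) ^ (j + 1) ≤ 0 by
    rw [← abs_of_nonpos h, abs_mul, abs_pow, abs_neg, abs_one, one_pow, mul_one]
  induction j with
  | zero => norm_num [dcoef]
  | succ j ih =>
    rw [dcoef, prod_range_succ, ← dcoef, pow_succ]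
    have : (0 : ℝ) ≤ -(1 / 2 - (j + 1 : ℕ)) := by push_cast; linarith
    nlinarith

theorem hasSum_abs_dcoef_div_factorial_mul_pow {t : ℝ} (ht : |t| < 1) :
    HasSum (fun j ↦ |dcoef j / j.factorial| * t ^ j) (2 - √(1 - t)) := by
  have hterm : ∀ j : ℕ, |dcoef j / j.factorial| * t ^ j =
      (if j = 0 then 2 else 0) - dcoef j / j.factorial * (-t) ^ j := by
    rintro (_ | j)
    · norm_num [dcoef]
    · rw [abs_div, Nat.abs_cast, abs_dcoef_succ, neg_pow t]
      simp only [Nat.add_one_ne_zero, if_false]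
      ring
  simpa only [hterm] using
    (hasSum_ite_eq 0 (2 : ℝ)).sub (hasSum_dcoef_div_factorial_mul_neg_pow ht)

theorem sum_range_abs_dcoef_div_factorial_le_two (n : ℕ) :
    ∑ j ∈ range n, |dcoef j / j.factorial| ≤ 2 := by
  have hlim : Tendsto (fun t : ℝ ↦ ∑ j ∈ range n, |dcoef j / j.factorial| * t ^ j) (𝓝[<] 1)
      (𝓝 (∑ j ∈ range n, |dcoef j / j.factorial|)) := by
    have hcont : Continuous fun t : ℝ ↦ ∑ j ∈ range n, |dcoef j / j.factorial| * t ^ j := by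
      fun_prop
    simpa using (hcont.tendsto 1).mono_left nhdsWithin_le_nhds
  refine le_of_tendsto hlim ?_
  filter_upwards [Ioo_mem_nhdsLT (zero_lt_one' ℝ)] with t ⟨ht0, ht1⟩
  calc ∑ j ∈ range n, |dcoef j / j.factorial| * t ^ j ≤ 2 - √(1 - t) :=
        sum_le_hasSum _ (fun j _ ↦ by positivity)
          (hasSum_abs_dcoef_div_factorial_mul_pow (abs_lt.mpr ⟨by linarith, ht1⟩))
    _ ≤ 2 := sub_le_self 2 (Real.sqrt_nonneg _)

theorem summable_abs_dcoef_div_factorial_mul_pow {t : ℝ} (ht0 : 0 ≤ t) (ht1 : t ≤ 1) :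
    Summable fun j ↦ |dcoef j / j.factorial| * t ^ j :=
  .of_nonneg_of_le (fun j ↦ by positivity)
    (fun j ↦ mul_le_of_le_one_right (abs_nonneg _) (pow_le_one₀ ht0 ht1))
    (summable_of_sum_range_le (fun j ↦ abs_nonneg _) sum_range_abs_dcoef_div_factorial_le_two)

theorem tsum_abs_dcoef_div_factorial_mul_pow_le {t : ℝ} (ht0 : 0 ≤ t) (ht1 : t ≤ 1) :
    ∑' j, |dcoef j / j.factorial| * t ^ j ≤ 2 - √(1 - t) := by
  rcases ht1.lt_or_eq with ht1 | rfl
  · exact (hasSum_abs_dcoef_div_factorial_mul_pow (abs_lt.mpr ⟨by linarith, ht1⟩)).tsum_eq.le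
  · simpa only [one_pow, mul_one, sub_self, Real.sqrt_zero, sub_zero] using
      Real.tsum_le_of_sum_range_le (fun j ↦ abs_nonneg _) sum_range_abs_dcoef_div_factorial_le_two

section NormedRing

variable {𝕜 B : Type*} [NormedField 𝕜] [NormedRing B] [NormedAlgebra 𝕜 B]

theorem norm_mul_pow_le_mul_pow (a b : B) (n : ℕ) : ‖a * b ^ n‖ ≤ ‖a‖ * ‖b‖ ^ n := by
  induction n with
  | zero => simp
  | succ n ih =>
    calc ‖a * b ^ (n + 1)‖ ≤ ‖a * b ^ n‖ * ‖b‖ := by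
          rw [pow_succ, ← mul_assoc]; exact norm_mul_le _ _
      _ ≤ ‖a‖ * ‖b‖ ^ (n + 1) := by rw [pow_succ, ← mul_assoc]; gcongr

theorem norm_mul_smul_pow_le (a y : B) (c : 𝕜) (n : ℕ) :
    ‖a * (c • y ^ n)‖ ≤ ‖c‖ * ‖y‖ ^ n * ‖a‖ := by
  rw [mul_smul_comm, norm_smul, mul_assoc, mul_comm (‖y‖ ^ n)]
  gcongr
  exact norm_mul_pow_le_mul_pow a y n

-- `‖1‖` may exceed `1` in a `NormedRing`, hence the detour through `1 * y ^ n`.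
theorem summable_norm_smul_pow {c : ℕ → 𝕜} {y : B} (h : Summable fun n ↦ ‖c n‖ * ‖y‖ ^ n) :
    Summable fun n ↦ ‖c n • y ^ n‖ :=
  .of_nonneg_of_le (fun n ↦ norm_nonneg _)
    (fun n ↦ by simpa only [one_mul] using norm_mul_smul_pow_le (1 : B) y (c n) n)
    (h.mul_right ‖(1 : B)‖)

theorem norm_mul_tsum_smul_pow_le [CompleteSpace B] (a : B) {c : ℕ → 𝕜} {y : B}
    (h : Summable fun n ↦ ‖c n‖ * ‖y‖ ^ n) :
    ‖a * ∑' n, c n • y ^ n‖ ≤ (∑' n, ‖c n‖ * ‖y‖ ^ n) * ‖a‖ := by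
  rw [← (summable_norm_smul_pow h).of_norm.tsum_mul_left, ← tsum_mul_right]
  exact tsum_of_norm_bounded (h.mul_right ‖a‖).hasSum fun n ↦ norm_mul_smul_pow_le a y (c n) n

end NormedRing

/-- Lemma 7 of the paper: if `S² = A`, `‖Y‖ ≤ 1` and
`X = S · Σ_j (d_j/j!)(-Y)^j` (the series converges absolutely), then
`‖S‖ ≥ max(√‖A‖, ‖X‖/(2 - √(1 - ‖Y‖)))`. -/
theorem norm_sqrt_lower_bound {B : Type*} [NormedRing B]
    [NormedAlgebra ℂ B] [CompleteSpace B]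
    (A S Y : B) (hS : S ^ 2 = A) (hY : ‖Y‖ ≤ 1)
    (X : B)
    (hX : X = S * ∑' j : ℕ, ((dcoef j / (j.factorial : ℝ) : ℝ) : ℂ) • (-Y) ^ j) :
    Summable (fun j : ℕ => ‖((dcoef j / (j.factorial : ℝ) : ℝ) : ℂ) • (-Y) ^ j‖) ∧
    max (Real.sqrt ‖A‖) (‖X‖ / (2 - Real.sqrt (1 - ‖Y‖))) ≤ ‖S‖ := by
  have hmajor : Summable fun j : ℕ ↦
      ‖((dcoef j / (j.factorial : ℝ) : ℝ) : ℂ)‖ * ‖-Y‖ ^ j := by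
    simpa only [Complex.norm_real, Real.norm_eq_abs, norm_neg] using
      summable_abs_dcoef_div_factorial_mul_pow (norm_nonneg Y) hY
  refine ⟨summable_norm_smul_pow hmajor, max_le ?_ ?_⟩
  · exact Real.sqrt_le_iff.mpr ⟨norm_nonneg S, hS ▸ norm_pow_le' S two_pos⟩
  · have hpos : 0 < 2 - √(1 - ‖Y‖) := by
      linarith [Real.sqrt_le_one.mpr (show 1 - ‖Y‖ ≤ 1 by linarith [norm_nonneg Y])]
    rw [div_le_iff₀ hpos, hX, mul_comm ‖S‖]
    calc ‖S * ∑' j : ℕ, ((dcoef j / (j.factorial : ℝ) : ℝ) : ℂ) • (-Y) ^ j‖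
        ≤ (∑' j : ℕ, |dcoef j / j.factorial| * ‖Y‖ ^ j) * ‖S‖ := by
          simpa only [Complex.norm_real, Real.norm_eq_abs, norm_neg] using
            norm_mul_tsum_smul_pow_le S hmajor
      _ ≤ (2 - √(1 - ‖Y‖)) * ‖S‖ := by
          gcongr
          exact tsum_abs_dcoef_div_factorial_mul_pow_le (norm_nonneg Y) hY
end

section
/- Let A ∈ ℂ^{n×n} (n ≥ 1) be Hermitian positive definite, let A^{1/2} denote its unique positive-definite square root, A^{−1/2} = (A^{1/2})⁻¹, and let (Aᵀ)^{1/2} denote the unique positive-definite square root of the transpose Aᵀ. Define the n²×n² matrix J = (1/2)(I − (Aᵀ)^{1/2} ⊗ A^{−1/2}), where ⊗ is the Kronecker product. Then the spectral radius of J is at most 1 if and only if λ_max(A) ≤ 9·λ_min(A), where λ_max(A) and λ_min(A) are the largest and smallest eigenvalues of A. -/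
/-!
Since `T` and `S⁻¹` are Hermitian, `T ⊗ₖ S⁻¹` is unitarily similar to a diagonal matrix and its
eigenvalues are the quotients `t / s` of eigenvalues of `T` and `S`. Both `T` and `S` are positive
square roots of matrices with the spectrum of `A`, so `t = √a` and `s = √b` for eigenvalues `a, b`
of `A`. The eigenvalues `(1 - √a / √b) / 2` of `J` are real and at most `1/2`, and they are `≥ -1`
exactly when `√a ≤ 3 √b`, i.e. `a ≤ 9 b`.
-/

open Matrix Kronecker
open scoped ComplexOrder NNReal Pointwise

theorem spectralRadius_le_coe_iff {𝕜 A : Type*} [NormedField 𝕜] [Ring A] [Algebra 𝕜 A] {a : A}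
    {r : ℝ≥0} : spectralRadius 𝕜 a ≤ r ↔ ∀ k ∈ spectrum 𝕜 a, ‖k‖₊ ≤ r := by
  simp only [spectralRadius, iSup₂_le_iff, ENNReal.coe_le_coe]

theorem spectrum.smul_one_sub_eq_image {𝕜 A : Type*} [Field 𝕜] [Ring A] [Algebra 𝕜 A] (a : A)
    {c : 𝕜} (hc : c ≠ 0) :
    spectrum 𝕜 (c • (1 - a)) = (fun z => c * (1 - z)) '' spectrum 𝕜 a := by
  have h := unit_smul_eq_smul (1 - a) (Units.mk0 c hc)
  rw [Units.smul_def, Units.smul_def, Units.val_mk0] at h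
  rw [h, ← map_one (algebraMap 𝕜 A), ← singleton_sub_eq, Set.singleton_sub, ← Set.image_smul,
    Set.image_image]
  rfl

theorem Finset.sup'_le_mul_inf'_iff {ι α : Type*} [Semiring α] [LinearOrder α] [PosMulMono α]
    {s : Finset ι} (H : s.Nonempty) (f : ι → α) {c : α} (hc : 0 ≤ c) :
    s.sup' H f ≤ c * s.inf' H f ↔ ∀ i ∈ s, ∀ j ∈ s, f i ≤ c * f j := by
  refine ⟨fun h i hi j hj => ?_, fun h => ?_⟩
  · exact (le_sup' f hi).trans (h.trans (mul_le_mul_of_nonneg_left (inf'_le f hj) hc))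
  · obtain ⟨i, hi, hi_eq⟩ := exists_mem_eq_sup' H f
    obtain ⟨j, hj, hj_eq⟩ := exists_mem_eq_inf' H f
    rw [hi_eq, hj_eq]
    exact h i hi j hj

namespace Matrix

variable {m n 𝕜 : Type*} [Fintype m] [DecidableEq m] [Fintype n] [DecidableEq n]

theorem spectrum_transpose {R α : Type*} [CommSemiring R] [CommRing α] [Algebra R α]
    (A : Matrix n n α) : spectrum R Aᵀ = spectrum R A := by
  ext r
  rw [spectrum.mem_iff, spectrum.mem_iff, ← isUnit_transpose, transpose_sub, algebraMap_eq_diagonal,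
    transpose_transpose, diagonal_transpose]

theorem spectrum_inv {K : Type*} [Field K] {A : Matrix n n K} (hA : IsUnit A) :
    spectrum K A⁻¹ = (spectrum K A)⁻¹ := by
  rw [← hA.unit_spec, ← coe_units_inv, spectrum.map_inv]

theorem IsHermitian.spectrum_kronecker [RCLike 𝕜] {A : Matrix m m 𝕜} {B : Matrix n n 𝕜}
    (hA : A.IsHermitian) (hB : B.IsHermitian) :
    spectrum 𝕜 (A ⊗ₖ B) = spectrum 𝕜 A * spectrum 𝕜 B := by
  set U := hA.eigenvectorUnitary
  set V := hB.eigenvectorUnitary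
  let W : unitary (Matrix (m × n) (m × n) 𝕜) := ⟨U ⊗ₖ V, kronecker_mem_unitary U.2 V.2⟩
  have hAB : A ⊗ₖ B = (W : Matrix (m × n) (m × n) 𝕜) *
      diagonal (fun p : m × n => (hA.eigenvalues p.1 * hB.eigenvalues p.2 : 𝕜)) *
      star (W : Matrix (m × n) (m × n) 𝕜) := by
    conv_lhs => rw [hA.spectral_theorem, hB.spectral_theorem]
    simp only [Unitary.conjStarAlgAut_apply, mul_kronecker_mul, diagonal_kronecker_diagonal, W,
      star_eq_conjTranspose, conjTranspose_kronecker]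
    rfl
  rw [hAB, Unitary.spectrum_star_right_conjugate, spectrum_diagonal, hA.spectrum_eq_image_range,
    hB.spectrum_eq_image_range, ← Set.range_comp, ← Set.range_comp, ← Set.image2_mul,
    Set.image2_range]
  rfl

theorem PosSemidef.spectrum_eq_image_spectrum_sq {S : Matrix n n ℂ} (hS : S.PosSemidef) :
    spectrum ℂ S = (fun z : ℂ => (√z.re : ℂ)) '' spectrum ℂ (S ^ 2) := by
  rw [spectrum.map_pow_of_pos S two_pos, Set.image_image, hS.isHermitian.spectrum_eq_image_range,
    Set.image_image]
  refine Set.image_congr fun x ⟨i, hi⟩ => ?_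
  subst hi
  simp [← Complex.ofReal_pow, Real.sqrt_sq (hS.eigenvalues_nonneg i)]

end Matrix

theorem Complex.norm_half_mul_one_sub_sqrt_div_sqrt_le_one_iff {x y : ℝ} (hy : 0 < y) :
    ‖(1 / 2 : ℂ) * (1 - (√x : ℂ) / (√y : ℂ))‖ ≤ 1 ↔ x ≤ 9 * y := by
  have hcast : (1 / 2 : ℂ) * (1 - (√x : ℂ) / (√y : ℂ)) = ((1 / 2 * (1 - √x / √y) : ℝ) : ℂ) := by
    push_cast; rfl
  have hratio : 0 ≤ √x / √y := by positivity
  rw [hcast, norm_real, Real.norm_eq_abs, abs_le]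
  calc (-1 ≤ 1 / 2 * (1 - √x / √y) ∧ 1 / 2 * (1 - √x / √y) ≤ 1) ↔ √x / √y ≤ 3 :=
        ⟨fun h => by linarith [h.1], fun h => ⟨by linarith, by linarith⟩⟩
    _ ↔ √x ≤ √(3 ^ 2 * y) := by
        rw [div_le_iff₀ (Real.sqrt_pos.mpr hy), Real.sqrt_mul (by positivity),
          Real.sqrt_sq (by norm_num)]
    _ ↔ x ≤ 9 * y := by rw [Real.sqrt_le_sqrt_iff (by positivity)]; norm_num

/-- Conditional stability of the inverse-Newton iteration: for a Hermitian
positive definite `A` with positive-definite square root `S` (and `T` the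
positive-definite square root of `Aᵀ`), the spectral radius of the Jacobian
`J = (1/2)(I - (Aᵀ)^{1/2} ⊗ A^{-1/2})` is at most `1` iff
`λ_max(A) ≤ 9 λ_min(A)`. -/
theorem spectralRadius_J_le_one_iff {n : ℕ} (hn : 0 < n)
    (A : Matrix (Fin n) (Fin n) ℂ) (hA : A.PosDef)
    (S : Matrix (Fin n) (Fin n) ℂ) (hS : S.PosDef) (hS2 : S ^ 2 = A)
    (T : Matrix (Fin n) (Fin n) ℂ) (hT : T.PosDef) (hT2 : T ^ 2 = Aᵀ) :
    spectralRadius ℂ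
        ((1/2 : ℂ) • ((1 : Matrix (Fin n × Fin n) (Fin n × Fin n) ℂ) - T ⊗ₖ S⁻¹))
        ≤ 1 ↔
      Finset.univ.sup' (Finset.univ_nonempty_iff.mpr (Fin.pos_iff_nonempty.mp hn))
          hA.isHermitian.eigenvalues ≤
        9 * Finset.univ.inf' (Finset.univ_nonempty_iff.mpr (Fin.pos_iff_nonempty.mp hn))
          hA.isHermitian.eigenvalues := by
  have hTS : spectrum ℂ T = spectrum ℂ S := by
    rw [hT.posSemidef.spectrum_eq_image_spectrum_sq, hS.posSemidef.spectrum_eq_image_spectrum_sq,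
      hT2, hS2, spectrum_transpose]
  have hS_eig : spectrum ℂ S = (fun x : ℝ => (√x : ℂ)) '' Set.range hA.isHermitian.eigenvalues := by
    rw [hS.posSemidef.spectrum_eq_image_spectrum_sq, hS2, hA.isHermitian.spectrum_eq_image_range,
      Set.image_image]
    simp only [Complex.coe_algebraMap, Complex.ofReal_re]
  have hJ : spectrum ℂ ((1/2 : ℂ) • ((1 : Matrix (Fin n × Fin n) (Fin n × Fin n) ℂ) - T ⊗ₖ S⁻¹)) =
      (fun z => 1 / 2 * (1 - z)) '' (spectrum ℂ S * (spectrum ℂ S)⁻¹) := by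
    rw [spectrum.smul_one_sub_eq_image _ (by norm_num),
      hT.isHermitian.spectrum_kronecker hS.inv.isHermitian, spectrum_inv hS.isUnit, hTS]
  rw [← ENNReal.coe_one, spectralRadius_le_coe_iff, hJ,
    Finset.sup'_le_mul_inf'_iff _ _ (by norm_num)]
  simp only [Set.forall_mem_image, ← Set.image_inv_eq_inv, ← Set.image2_mul, Set.forall_mem_image2,
    hS_eig, Set.forall_mem_range, Finset.mem_univ, forall_const]
  refine forall₂_congr fun i j => ?_
  rw [← NNReal.coe_le_coe, coe_nnnorm, NNReal.coe_one, ← div_eq_mul_inv]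
  exact Complex.norm_half_mul_one_sub_sqrt_div_sqrt_le_one_iff (hA.eigenvalues_pos j)
end

section
/- Let A ∈ ℂ^{n×n} be nonzero, equip ℂ^{n×n} with the operator norm ‖·‖ induced by the Euclidean norm on ℂⁿ, set Y₀ = I − (1/(2‖A‖))A, and assume ‖Y₀‖ < 1. Define S = √(2‖A‖)·Σ_{j=0}^{∞} (d_j/j!)(−Y₀)^j and, for N ∈ ℕ, the truncation f_N = √(2‖A‖)·Σ_{j=0}^{N} (d_j/j!)(−Y₀)^j. If ε > 0 satisfies Σ_{j=N+1}^{∞} |d_j/j!| ‖Y₀‖^j ≤ ε/√2, then ‖S − f_N‖ ≤ ε‖S‖. -/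
open scoped Matrix.Norms.L2Operator

lemma descPochhammer_smeval_half (j : ℕ) :
    Polynomial.smeval (descPochhammer ℤ j) ((1:ℝ)/2) = dcoef j := by
  induction j with
  | zero => simp [dcoef]
  | succ j ih =>
    rw [descPochhammer_succ_right, Polynomial.smeval_mul, ih]
    rw [show dcoef (j+1) = dcoef j * ((1:ℝ)/2 - j) from Finset.prod_range_succ _ j]
    congr 1
    simp [Polynomial.smeval_sub, Polynomial.smeval_natCast]

lemma ring_choose_half (j : ℕ) :
    Ring.choose ((1:ℝ)/2) j = dcoef j / (j.factorial : ℝ) := by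
  have h := Ring.descPochhammer_eq_factorial_smul_choose ((1:ℝ)/2) j
  rw [descPochhammer_smeval_half, nsmul_eq_mul] at h
  field_simp
  linarith [h]

lemma abs_dcoef_le (j : ℕ) : |dcoef j| ≤ (j.factorial : ℝ) := by
  induction j with
  | zero => simp [dcoef]
  | succ j ih =>
    rw [dcoef, Finset.prod_range_succ, ← dcoef, abs_mul]
    have h1 : |(1:ℝ)/2 - j| ≤ (j:ℝ) + 1 := by
      rw [abs_le]; constructor <;> [skip; skip] <;>
        · have : (0:ℝ) ≤ j := Nat.cast_nonneg j
          linarith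
    calc |dcoef j| * |(1:ℝ)/2 - j| ≤ (j.factorial : ℝ) * ((j:ℝ)+1) := by
          apply mul_le_mul ih h1 (abs_nonneg _) (Nat.cast_nonneg _)
      _ = ((j+1).factorial : ℝ) := by
          rw [Nat.factorial_succ]; push_cast; ring

lemma coeff_sum (k : ℕ) :
    ∑ kl ∈ Finset.HasAntidiagonal.antidiagonal k,
      (dcoef kl.1 / (kl.1.factorial : ℝ)) * (dcoef kl.2 / (kl.2.factorial : ℝ)) =
      (Nat.choose 1 k : ℝ) := by
  have h := Ring.add_choose_eq (R := ℝ) (r := (1:ℝ)/2) (s := (1:ℝ)/2) k (Commute.all _ _)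
  have h1 : ((1:ℝ)/2 + (1:ℝ)/2) = ((1:ℕ) : ℝ) := by norm_num
  rw [h1, Ring.choose_natCast] at h
  rw [h]
  exact Finset.sum_congr rfl fun kl _ => by rw [ring_choose_half, ring_choose_half]

set_option maxHeartbeats 1000000 in
/-- Truncation estimate (Eqs. (33)–(34)) in the proof of Theorem 4 of the
paper: with `Y₀ = I - A/(2‖A‖)`, `‖Y₀‖ < 1`, `S = √(2‖A‖) Σ_{j=0}^∞
(d_j/j!)(-Y₀)^j` and `f_N` the degree-`N` truncation, if
`Σ_{j=N+1}^∞ |d_j/j!| ‖Y₀‖^j ≤ ε/√2` then `‖S - f_N‖ ≤ ε‖S‖`. -/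
theorem truncation_relative_error {n : ℕ} (A : Matrix (Fin n) (Fin n) ℂ)
    (hA : A ≠ 0)
    (Y₀ : Matrix (Fin n) (Fin n) ℂ) (hY₀ : Y₀ = 1 - (1 / (2 * ‖A‖)) • A)
    (hy₀ : ‖Y₀‖ < 1)
    (S : Matrix (Fin n) (Fin n) ℂ)
    (hS : S = Real.sqrt (2 * ‖A‖) •
      ∑' j : ℕ, (dcoef j / (j.factorial : ℝ)) • (-Y₀) ^ j)
    (N : ℕ) (fN : Matrix (Fin n) (Fin n) ℂ)
    (hfN : fN = Real.sqrt (2 * ‖A‖) •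
      ∑ j ∈ Finset.range (N + 1), (dcoef j / (j.factorial : ℝ)) • (-Y₀) ^ j)
    (ε : ℝ) (hε : 0 < ε)
    (htail : ∑' j : ℕ, |dcoef (N + 1 + j) / ((N + 1 + j).factorial : ℝ)| *
        ‖Y₀‖ ^ (N + 1 + j) ≤ ε / Real.sqrt 2) :
    ‖S - fN‖ ≤ ε * ‖S‖ := by
  rcases Nat.eq_zero_or_pos n with hn | hn
  · subst hn
    have : S - fN = 0 := Subsingleton.elim _ _
    rw [this, norm_zero]
    positivity
  haveI : Nonempty (Fin n) := ⟨⟨0, hn⟩⟩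
  set c : ℕ → ℝ := fun j => dcoef j / (j.factorial : ℝ) with hc
  set x : Matrix (Fin n) (Fin n) ℂ := -Y₀ with hxdef
  set g : ℕ → Matrix (Fin n) (Fin n) ℂ := fun j => c j • x ^ j with hg
  have hxnorm : ‖x‖ = ‖Y₀‖ := norm_neg _
  have ht0 : 0 ≤ ‖Y₀‖ := norm_nonneg _
  have hone : ‖(1 : Matrix (Fin n) (Fin n) ℂ)‖ = 1 := CStarRing.norm_one
  have hpow : ∀ j, ‖x ^ j‖ ≤ ‖Y₀‖ ^ j := by
    intro j
    induction j with
    | zero => simp [hone]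
    | succ j ih =>
      calc ‖x ^ (j+1)‖ = ‖x ^ j * x‖ := by rw [pow_succ]
        _ ≤ ‖x ^ j‖ * ‖x‖ := norm_mul_le _ _
        _ ≤ ‖Y₀‖ ^ j * ‖Y₀‖ := by
            apply mul_le_mul ih (le_of_eq hxnorm) (norm_nonneg _) (pow_nonneg ht0 _)
        _ = ‖Y₀‖ ^ (j+1) := (pow_succ _ _).symm
  have hcle : ∀ j, |c j| ≤ 1 := by
    intro j
    rw [hc, abs_div, abs_of_nonneg (by positivity : (0:ℝ) ≤ (j.factorial : ℝ))]
    rw [div_le_one (by positivity)]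
    exact abs_dcoef_le j
  have hgnorm : ∀ j, ‖g j‖ ≤ |c j| * ‖Y₀‖ ^ j := by
    intro j
    rw [hg]
    calc ‖c j • x ^ j‖ = |c j| * ‖x ^ j‖ := by rw [norm_smul, Real.norm_eq_abs]
      _ ≤ |c j| * ‖Y₀‖ ^ j := by
          exact mul_le_mul_of_nonneg_left (hpow j) (abs_nonneg _)
  have hcb : Summable (fun j => |c j| * ‖Y₀‖ ^ j) := by
    apply Summable.of_nonneg_of_le (fun j => by positivity)
      (fun j => ?_) (summable_geometric_of_lt_one ht0 hy₀)
    calc |c j| * ‖Y₀‖ ^ j ≤ 1 * ‖Y₀‖ ^ j := by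
          exact mul_le_mul_of_nonneg_right (hcle j) (by positivity)
      _ = ‖Y₀‖ ^ j := one_mul _
  have hgnormsum : Summable (fun j => ‖g j‖) :=
    Summable.of_nonneg_of_le (fun j => norm_nonneg _) hgnorm hcb
  have hgs : Summable g := hgnormsum.of_norm
  set B : Matrix (Fin n) (Fin n) ℂ := ∑' j, g j with hB
  -- the square of the series
  have hBB : B * B = 1 + x := by
    rw [hB, tsum_mul_tsum_eq_tsum_sum_antidiagonal_of_summable_norm hgnormsum hgnormsum]
    have hterm : ∀ k : ℕ, (∑ kl ∈ Finset.HasAntidiagonal.antidiagonal k, g kl.1 * g kl.2)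
        = ((Nat.choose 1 k : ℝ)) • x ^ k := by
      intro k
      rw [← coeff_sum k, Finset.sum_smul]
      apply Finset.sum_congr rfl
      intro kl hkl
      rw [hg]
      rw [smul_mul_smul_comm, ← pow_add,
        (Finset.HasAntidiagonal.mem_antidiagonal.mp hkl : kl.1 + kl.2 = k)]
    rw [tsum_congr hterm]
    rw [tsum_eq_sum (s := {0, 1}) (by
      intro k hk
      have h2 : 2 ≤ k := by
        rcases k with _ | _ | k
        · simp at hk
        · simp at hk
        · omega
      rw [Nat.choose_eq_zero_of_lt (by omega)]
      simp)]
    rw [Finset.sum_pair (by norm_num : (0:ℕ) ≠ 1)]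
    simp
  have hAnorm : (0:ℝ) < ‖A‖ := norm_pos_iff.mpr hA
  have h2A : (0:ℝ) < 2 * ‖A‖ := by linarith
  have hr : Real.sqrt (2 * ‖A‖) * Real.sqrt (2 * ‖A‖) = 2 * ‖A‖ :=
    Real.mul_self_sqrt h2A.le
  -- S * S = A
  have hSS : S * S = A := by
    rw [hS, smul_mul_smul_comm, hr, hBB]
    have hx1 : (1 : Matrix (Fin n) (Fin n) ℂ) + x = (1 / (2 * ‖A‖)) • A := by
      rw [hxdef, hY₀]; abel
    rw [hx1, smul_smul]
    rw [mul_one_div, div_self h2A.ne', one_smul]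
  have hSnorm : Real.sqrt ‖A‖ ≤ ‖S‖ := by
    have h1 : ‖A‖ ≤ ‖S‖ * ‖S‖ := by
      rw [← hSS]; exact norm_mul_le _ _
    calc Real.sqrt ‖A‖ ≤ Real.sqrt (‖S‖ * ‖S‖) := Real.sqrt_le_sqrt h1
      _ = ‖S‖ := Real.sqrt_mul_self (norm_nonneg _)
  -- tail estimate
  have hsplit := Summable.sum_add_tsum_nat_add (f := g) (N + 1) hgs
  have hdiff : B - (∑ j ∈ Finset.range (N + 1), g j) = ∑' j, g (j + (N + 1)) := by
    rw [hB, ← hsplit]; abel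
  have htails : Summable (fun j => ‖g (j + (N + 1))‖) :=
    (summable_nat_add_iff (N + 1)).mpr hgnormsum
  have htail' : ∑' j : ℕ, ‖g (j + (N + 1))‖ ≤ ε / Real.sqrt 2 := by
    refine le_trans (Summable.tsum_le_tsum (fun j => ?_) htails
      ((summable_nat_add_iff (N + 1)).mpr hcb)) ?_
    · exact hgnorm _
    · refine le_trans (le_of_eq (tsum_congr fun j => ?_)) htail
      rw [Nat.add_comm]
  have hdiffnorm : ‖B - (∑ j ∈ Finset.range (N + 1), g j)‖ ≤ ε / Real.sqrt 2 := by
    rw [hdiff]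
    exact le_trans (norm_tsum_le_tsum_norm htails) htail'
  have hSfN : S - fN = Real.sqrt (2 * ‖A‖) • (B - (∑ j ∈ Finset.range (N + 1), g j)) := by
    rw [hS, hfN, smul_sub, hB]
  have key : ‖S - fN‖ ≤ Real.sqrt (2 * ‖A‖) * (ε / Real.sqrt 2) := by
    rw [hSfN, norm_smul, Real.norm_eq_abs,
      abs_of_nonneg (Real.sqrt_nonneg _)]
    exact mul_le_mul_of_nonneg_left hdiffnorm (Real.sqrt_nonneg _)
  have hsqrt2 : (0:ℝ) < Real.sqrt 2 := by positivity
  have hfinal : Real.sqrt (2 * ‖A‖) * (ε / Real.sqrt 2) = ε * Real.sqrt ‖A‖ := by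
    rw [Real.sqrt_mul (by norm_num : (0:ℝ) ≤ 2)]
    field_simp
  calc ‖S - fN‖ ≤ Real.sqrt (2 * ‖A‖) * (ε / Real.sqrt 2) := key
    _ = ε * Real.sqrt ‖A‖ := hfinal
    _ ≤ ε * ‖S‖ := mul_le_mul_of_nonneg_left hSnorm hε.le
end
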